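/- arXiv:2512.09614 — 10 statements merged into one kernel-verified Lean document; each statement's English description precedes it below -/
import Mathlib

section
/- Let n₀, ℓ ∈ ω and let s ∈ ω^{<ω} satisfy t_{n₀}⌢ℓ ⊆ s (i.e., s end-extends the sequence t_{n₀} followed by the single value ℓ). Then ν({ρ ∈ Ω : t_{n₀} ∉ W(ρ) and s ∈ W(ρ)}) ≤ 2^{-ℓ}. -/
open MeasureTheory
open scoped ENNReal

/-- `sFn e n ρ` is the finite sequence `t_n ⌢ ⟨ρ(t_n,0), …, ρ(t_n,n+1)⟩`. -/
def sFn (e : ℕ → List ℕ) (n : ℕ) (ρ : List ℕ × ℕ → ℕ) : List ℕ :=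
  e n ++ List.ofFn fun i : Fin (n + 2) => ρ (e n, (i : ℕ))

/-- `Wset e ρ = {s : s_{t_n}(ρ) ⊆ s for some n}`. -/
def Wset (e : ℕ → List ℕ) (ρ : List ℕ × ℕ → ℕ) : Set (List ℕ) :=
  {s | ∃ n, sFn e n ρ <+: s}

/-!
If `t_{n₀} ∉ W(ρ)` but `s_{t_n}(ρ) ⊆ s`, then `s_{t_n}(ρ)` is comparable with `t_{n₀}⌢ℓ` and not
below `t_{n₀}`, so it extends `t_{n₀}⌢ℓ`. Either `t_n` is the initial segment of `t_{n₀}` of length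
`|t_{n₀}| - d`, and then the `d + 1` values `ρ(t_n, 0..d)` are prescribed by `s`, the last one being
`ℓ`: probability at most `2^{-ℓ} 2^{-(d+1)}`. Or `t_n` extends `t_{n₀}⌢ℓ`, whose index exceeds
`n₀ + ℓ` because `t_{n₀}, t_{n₀}⌢0, …, t_{n₀}⌢ℓ` are enumerated in increasing order; then all
`n + 2 ≥ n₀ + ℓ + 3` values `ρ(t_n, ·)` are prescribed by `s`. As `L = |t_{n₀}| ≤ n₀`, the total is
at most `2^{-ℓ} (∑_{d ≤ L} 2^{-(d+1)} + 2^{-(L+1)}) = 2^{-ℓ}`.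
-/

open Finset

namespace ENNReal

lemma inv_two_pow_succ_add_self (n : ℕ) : (2 : ℝ≥0∞)⁻¹ ^ (n + 1) + 2⁻¹ ^ (n + 1) = 2⁻¹ ^ n := by
  rw [pow_succ, ← mul_add, inv_two_add_inv_two, mul_one]

lemma sum_range_inv_two_pow_succ_add (n : ℕ) :
    ∑ d ∈ range n, (2 : ℝ≥0∞)⁻¹ ^ (d + 1) + 2⁻¹ ^ n = 1 := by
  induction n with
  | zero => simp
  | succ n ih => rw [sum_range_succ, add_assoc, inv_two_pow_succ_add_self, ih]

lemma tsum_inv_two_pow_succ : ∑' k : ℕ, (2 : ℝ≥0∞)⁻¹ ^ (k + 1) = 1 := by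
  rw [tsum_geometric_add_one, one_sub_inv_two, inv_inv,
    ENNReal.inv_mul_cancel two_ne_zero ofNat_ne_top]

lemma prod_range_inv_two_pow_succ_le (f : ℕ → ℕ) (k : ℕ) :
    ∏ j ∈ range k, (2 : ℝ≥0∞)⁻¹ ^ (f j + 1) ≤ 2⁻¹ ^ k := by
  simpa using prod_le_pow_card (range k) _ _ fun j _ =>
    pow_le_of_le_one (by positivity) (ENNReal.inv_le_one.2 one_le_two) (Nat.succ_ne_zero (f j))

lemma prod_range_succ_inv_two_pow_succ_le (f : ℕ → ℕ) (d : ℕ) :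
    ∏ j ∈ range (d + 1), (2 : ℝ≥0∞)⁻¹ ^ (f j + 1) ≤ 2⁻¹ ^ f d * 2⁻¹ ^ (d + 1) := by
  rw [prod_range_succ]
  calc _ ≤ (2 : ℝ≥0∞)⁻¹ ^ d * 2⁻¹ ^ (f d + 1) := by
        gcongr; exact prod_range_inv_two_pow_succ_le f d
    _ = _ := by ring

end ENNReal

namespace List

variable {α : Type*}

lemma IsPrefix.getD_length_add {t u s : List α} (h : t ++ u <+: s) {j : ℕ} (hj : j < u.length)
    (d : α) : s.getD (t.length + j) d = u[j] := by
  have hlt : t.length + j < (t ++ u).length := by simpa using hj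
  rw [getD_eq_getElem _ _ (hlt.trans_le h.length_le), ← h.getElem hlt,
    getElem_append_right (by omega)]
  simp

lemma append_singleton_prefix_of_not_prefix {a t s : List α} {x : α} (ha : a <+: s)
    (ht : t ++ [x] <+: s) (hat : ¬a <+: t) : t ++ [x] <+: a := by
  rcases prefix_or_prefix_of_prefix ha ht with h | h
  · have hlen : t.length < a.length := by
      by_contra! hle
      exact hat (prefix_of_prefix_length_le ha ((prefix_append t [x]).trans ht) hle)
    rw [h.eq_of_length_le (by simpa using hlen)]
  · exact h

end List

section Enumeration

variable {e : ℕ → List ℕ}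

lemma length_le_of_prefix_lt (hsurj : Function.Surjective e)
    (hord : ∀ n ℓ, e n <+: e ℓ → e n ≠ e ℓ → n < ℓ) (n : ℕ) : (e n).length ≤ n := by
  suffices ∀ t n, e n = t → t.length ≤ n from this _ n rfl
  intro t
  induction t using List.reverseRecOn with
  | nil => exact fun n _ => n.zero_le
  | append_singleton t a ih =>
    intro n hn
    obtain ⟨m, hm⟩ := hsurj t
    have hmn : m < n := hord m n (by rw [hm, hn]; exact List.prefix_append _ _)
      (by rw [hm, hn]; intro h; simpa using congrArg List.length h)
    simpa using (ih m hm).trans_lt hmn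

lemma le_of_prefix_lt (hinj : Function.Injective e)
    (hord : ∀ n ℓ, e n <+: e ℓ → e n ≠ e ℓ → n < ℓ) {m n : ℕ} (h : e m <+: e n) : m ≤ n :=
  (eq_or_ne (e m) (e n)).elim (fun heq => (hinj heq).le) fun hne => (hord m n h hne).le

lemma add_lt_of_eq_append_singleton (hsurj : Function.Surjective e)
    (hord : ∀ n ℓ, e n <+: e ℓ → e n ≠ e ℓ → n < ℓ)
    (hsuc : ∀ n ℓ t k, e n = t ++ [k] → e ℓ = t ++ [k + 1] → n < ℓ)
    {n k m : ℕ} (hm : e m = e n ++ [k]) : n + k < m := by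
  induction k generalizing m with
  | zero =>
    exact hord n m (hm ▸ List.prefix_append _ _)
      (by rw [hm]; intro h; simpa using congrArg List.length h)
  | succ k ih =>
    obtain ⟨m', hm'⟩ := hsurj (e n ++ [k])
    have := ih hm'
    have := hsuc m' m _ k hm' hm
    omega

end Enumeration

def matchesAt (s t : List ℕ) (k : ℕ) : Set (List ℕ × ℕ → ℕ) :=
  {ρ | ∀ j < k, ρ (t, j) = s.getD (t.length + j) 0}

lemma matchesAt_anti {s t : List ℕ} {k k' : ℕ} (h : k ≤ k') :
    matchesAt s t k' ⊆ matchesAt s t k :=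
  fun _ hρ j hj => hρ j (hj.trans_le h)

lemma mem_matchesAt_of_sFn_prefix {e : ℕ → List ℕ} {n : ℕ} {ρ : List ℕ × ℕ → ℕ} {s : List ℕ}
    (h : sFn e n ρ <+: s) : ρ ∈ matchesAt s (e n) (n + 2) :=
  fun j hj => by
    rw [h.getD_length_add (u := List.ofFn fun i : Fin (n + 2) => ρ (e n, i))
      (by rwa [List.length_ofFn]), List.getElem_ofFn]

def HasGeometricMarginals (ν : Measure (List ℕ × ℕ → ℕ)) : Prop :=
  ∀ (F : Finset (List ℕ × ℕ)) (g : List ℕ × ℕ → ℕ),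
    ν {ρ | ∀ c ∈ F, ρ c = g c} = ∏ c ∈ F, ((2 : ℝ≥0∞)⁻¹) ^ (g c + 1)

section Marginals

variable {ν : Measure (List ℕ × ℕ → ℕ)}

lemma HasGeometricMarginals.measure_matchesAt (hν : HasGeometricMarginals ν)
    (s t : List ℕ) (k : ℕ) :
    ν (matchesAt s t k) = ∏ j ∈ range k, (2 : ℝ≥0∞)⁻¹ ^ (s.getD (t.length + j) 0 + 1) := by
  have h := hν ((range k).map (Function.Embedding.sectR t ℕ))
    fun c => s.getD (c.1.length + c.2) 0
  simp only [prod_map, Function.Embedding.sectR_apply] at h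
  convert h using 2
  ext ρ
  simp [matchesAt]

lemma HasGeometricMarginals.measure_matchesAt_le (hν : HasGeometricMarginals ν)
    (s t : List ℕ) (k : ℕ) :
    ν (matchesAt s t k) ≤ 2⁻¹ ^ k :=
  (hν.measure_matchesAt s t k).trans_le (ENNReal.prod_range_inv_two_pow_succ_le _ k)

lemma HasGeometricMarginals.measure_matchesAt_succ_le (hν : HasGeometricMarginals ν)
    (s t : List ℕ) (d : ℕ) :
    ν (matchesAt s t (d + 1)) ≤ 2⁻¹ ^ s.getD (t.length + d) 0 * 2⁻¹ ^ (d + 1) :=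
  (hν.measure_matchesAt s t (d + 1)).trans_le (ENNReal.prod_range_succ_inv_two_pow_succ_le _ d)

end Marginals

lemma setOf_notMem_Wset_and_mem_Wset_subset {e : ℕ → List ℕ} (hbij : Function.Bijective e)
    (hord : ∀ n ℓ, e n <+: e ℓ → e n ≠ e ℓ → n < ℓ)
    (hsuc : ∀ n ℓ t k, e n = t ++ [k] → e ℓ = t ++ [k + 1] → n < ℓ)
    {n₀ ℓ : ℕ} {s : List ℕ} (hs : e n₀ ++ [ℓ] <+: s) :
    {ρ | e n₀ ∉ Wset e ρ ∧ s ∈ Wset e ρ} ⊆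
      (⋃ d ∈ range ((e n₀).length + 1),
          matchesAt s ((e n₀).take ((e n₀).length - d)) (d + 1)) ∪
        ⋃ k, matchesAt s (e (n₀ + ℓ + 1 + k)) (n₀ + ℓ + 1 + k + 2) := by
  rintro ρ ⟨hT, n, hn⟩
  have hρ := mem_matchesAt_of_sFn_prefix hn
  have hTu : e n₀ ++ [ℓ] <+: sFn e n ρ :=
    List.append_singleton_prefix_of_not_prefix hn hs fun h => hT ⟨n, h⟩
  have hlen : (e n₀).length + 1 ≤ (e n).length + (n + 2) := by
    simpa [sFn] using hTu.length_le
  have hpre : e n <+: sFn e n ρ := List.prefix_append _ _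
  by_cases hc : (e n).length ≤ (e n₀).length
  · left
    have hnT : e n = (e n₀).take (e n).length := List.prefix_iff_eq_take.mp <|
      List.prefix_of_prefix_length_le hpre ((List.prefix_append _ _).trans hTu) hc
    refine Set.mem_biUnion (x := (e n₀).length - (e n).length) (by simp) ?_
    rw [Nat.sub_sub_self hc, ← hnT]
    exact matchesAt_anti (by omega) hρ
  · right
    have hTn : e n₀ ++ [ℓ] <+: e n :=
      List.prefix_of_prefix_length_le hTu hpre (by simp; omega)
    obtain ⟨m, hm⟩ := hbij.2 (e n₀ ++ [ℓ])
    have hm_lt := add_lt_of_eq_append_singleton hbij.2 hord hsuc hm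
    have hm_le := le_of_prefix_lt hbij.1 hord (hm ▸ hTn)
    obtain ⟨k, rfl⟩ := Nat.exists_eq_add_of_le (show n₀ + ℓ + 1 ≤ n by omega)
    exact Set.mem_iUnion.2 ⟨k, hρ⟩

theorem stmt0_general
    (e : ℕ → List ℕ) (hbij : Function.Bijective e)
    (hord : ∀ n ℓ, e n <+: e ℓ → e n ≠ e ℓ → n < ℓ)
    (hsuc : ∀ n ℓ t k, e n = t ++ [k] → e ℓ = t ++ [k + 1] → n < ℓ)
    (ν : Measure (List ℕ × ℕ → ℕ))
    (hν : ∀ (F : Finset (List ℕ × ℕ)) (g : List ℕ × ℕ → ℕ),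
      ν {ρ | ∀ c ∈ F, ρ c = g c} = ∏ c ∈ F, ((2 : ℝ≥0∞)⁻¹) ^ (g c + 1))
    (n₀ ℓ : ℕ) (s : List ℕ) (hs : e n₀ ++ [ℓ] <+: s) :
    ν {ρ | e n₀ ∉ Wset e ρ ∧ s ∈ Wset e ρ} ≤ (2 : ℝ≥0∞)⁻¹ ^ ℓ := by
  replace hν : HasGeometricMarginals ν := hν
  set L := (e n₀).length
  have hL : L ≤ n₀ := length_le_of_prefix_lt hbij.2 hord n₀
  have hsL : s.getD L 0 = ℓ := by
    simpa using hs.getD_length_add (u := [ℓ]) (j := 0) (by simp) 0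
  have hfirst (d : ℕ) (hd : d ∈ range (L + 1)) :
      ν (matchesAt s ((e n₀).take (L - d)) (d + 1)) ≤ 2⁻¹ ^ ℓ * 2⁻¹ ^ (d + 1) := by
    have hpos : ((e n₀).take (L - d)).length + d = L := by simp at hd; simp; omega
    simpa only [hpos, hsL] using hν.measure_matchesAt_succ_le s ((e n₀).take (L - d)) d
  have hsecond (k : ℕ) : ν (matchesAt s (e (n₀ + ℓ + 1 + k)) (n₀ + ℓ + 1 + k + 2)) ≤
      2⁻¹ ^ ℓ * 2⁻¹ ^ (L + 1) * 2⁻¹ ^ (k + 1) := by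
    rw [← pow_add, ← pow_add]
    exact (hν.measure_matchesAt_le _ _ _).trans
      (pow_le_pow_right_of_le_one' (ENNReal.inv_le_one.2 one_le_two) (by omega))
  calc ν {ρ | e n₀ ∉ Wset e ρ ∧ s ∈ Wset e ρ}
      ≤ ∑ d ∈ range (L + 1), ν (matchesAt s ((e n₀).take (L - d)) (d + 1)) +
          ∑' k, ν (matchesAt s (e (n₀ + ℓ + 1 + k)) (n₀ + ℓ + 1 + k + 2)) :=
        (measure_mono (setOf_notMem_Wset_and_mem_Wset_subset hbij hord hsuc hs)).trans <|
          (measure_union_le _ _).trans <|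
            add_le_add (measure_biUnion_finset_le _ _) (measure_iUnion_le _)
    _ ≤ ∑ d ∈ range (L + 1), 2⁻¹ ^ ℓ * 2⁻¹ ^ (d + 1) +
          ∑' k, 2⁻¹ ^ ℓ * 2⁻¹ ^ (L + 1) * 2⁻¹ ^ (k + 1) :=
        add_le_add (sum_le_sum hfirst) (ENNReal.tsum_le_tsum hsecond)
    _ = 2⁻¹ ^ ℓ * (∑ d ∈ range (L + 1), 2⁻¹ ^ (d + 1) + 2⁻¹ ^ (L + 1)) := by
        rw [ENNReal.tsum_mul_left, ENNReal.tsum_inv_two_pow_succ, ← mul_sum, mul_one, mul_add]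
    _ = 2⁻¹ ^ ℓ := by rw [ENNReal.sum_range_inv_two_pow_succ_add, mul_one]

theorem stmt0
    (e : ℕ → List ℕ) (hbij : Function.Bijective e)
    (hord : ∀ n ℓ, e n <+: e ℓ → e n ≠ e ℓ → n < ℓ)
    (hsuc : ∀ n ℓ t k, e n = t ++ [k] → e ℓ = t ++ [k + 1] → n < ℓ)
    (ν : Measure (List ℕ × ℕ → ℕ)) [IsProbabilityMeasure ν]
    (hν : ∀ (F : Finset (List ℕ × ℕ)) (g : List ℕ × ℕ → ℕ),
      ν {ρ | ∀ c ∈ F, ρ c = g c} = ∏ c ∈ F, ((2 : ℝ≥0∞)⁻¹) ^ (g c + 1))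
    (n₀ ℓ : ℕ) (s : List ℕ) (hs : e n₀ ++ [ℓ] <+: s) :
    ν {ρ | e n₀ ∉ Wset e ρ ∧ s ∈ Wset e ρ} ≤ (2 : ℝ≥0∞)⁻¹ ^ ℓ :=
  stmt0_general e hbij hord hsuc ν hν n₀ ℓ s hs
end

section
/- Let n₀ ∈ ω and let (s_ℓ)_{ℓ∈ω} be a sequence in ω^{<ω} such that t_{n₀}⌢ℓ ⊆ s_ℓ for every ℓ. Then for ν-almost every ρ ∈ Ω: if t_{n₀} ∉ W(ρ), then the set {ℓ ∈ ω : s_ℓ ∈ W(ρ)} is finite. -/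
/-!
Put `t = t_{n₀}` and let `B_ℓ` be the event that `s_ℓ` extends `s_{t_n}(ρ)` for some `t_n ⊇ t ⌢ ℓ`.
Children `t ⌢ k` are enumerated in increasing order of `k`, so every such `n` is at least `ℓ`;
and `s_{t_n}(ρ) ⊆ s_ℓ` fixes the `n + 2` coordinates `ρ (t_n, i)`. Hence
`ν B_ℓ ≤ ∑_{n ≥ ℓ} 2^{-(n+2)} = 2^{-(ℓ+1)}`, and by Borel–Cantelli almost every `ρ` lies in only
finitely many `B_ℓ`. If `t ∉ W(ρ)` and `s_ℓ ∈ W(ρ)` is witnessed by `s_{t_n}(ρ)` outside `B_ℓ`, then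
`s_{t_n}(ρ)` extends `t ⌢ ℓ` while `t_n ⊆ t`; so `n ≤ n₀` and `ℓ` is the entry of `s_{t_n}(ρ)` at
position `|t|`, which leaves only `n₀ + 1` possible values of `ℓ`.
-/

open MeasureTheory
open scoped ENNReal

structure IsTreeEnumeration (e : ℕ → List ℕ) : Prop where
  bijective : e.Bijective
  lt_of_prefix : ∀ n ℓ, e n <+: e ℓ → e n ≠ e ℓ → n < ℓ
  lt_of_concat_succ : ∀ n ℓ t k, e n = t ++ [k] → e ℓ = t ++ [k + 1] → n < ℓ

def HasGeometricCylinders (ν : Measure (List ℕ × ℕ → ℕ)) : Prop :=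
  ∀ (F : Finset (List ℕ × ℕ)) (g : List ℕ × ℕ → ℕ),
    ν {ρ | ∀ c ∈ F, ρ c = g c} = ∏ c ∈ F, ((2 : ℝ≥0∞)⁻¹) ^ (g c + 1)

/-- `B_ℓ` above is `subtreeHits e (t ++ [ℓ]) (s ℓ)`. -/
def subtreeHits (e : ℕ → List ℕ) (t u : List ℕ) : Set (List ℕ × ℕ → ℕ) :=
  {ρ | ∃ n, t <+: e n ∧ sFn e n ρ <+: u}

namespace IsTreeEnumeration

variable {e : ℕ → List ℕ}

lemma le_of_prefix (he : IsTreeEnumeration e) {n ℓ : ℕ} (h : e n <+: e ℓ) : n ≤ ℓ := by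
  rcases eq_or_ne (e n) (e ℓ) with heq | hne
  · exact (he.bijective.1 heq).le
  · exact (he.lt_of_prefix n ℓ h hne).le

lemma le_of_concat_prefix (he : IsTreeEnumeration e) (t : List ℕ) {ℓ n : ℕ}
    (h : t ++ [ℓ] <+: e n) : ℓ ≤ n := by
  choose idx hidx using fun k => he.bijective.2 (t ++ [k])
  have hmono : StrictMono idx :=
    strictMono_nat_of_lt_succ fun k => he.lt_of_concat_succ _ _ t k (hidx k) (hidx (k + 1))
  exact hmono.le_apply.trans (he.le_of_prefix ((hidx ℓ).symm ▸ h))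

end IsTreeEnumeration

section Lists

variable {e : ℕ → List ℕ} {ρ : List ℕ × ℕ → ℕ} {t u : List ℕ} {ℓ n : ℕ}

lemma getElem_sFn (e : ℕ → List ℕ) (n : ℕ) (ρ : List ℕ × ℕ → ℕ) {i : ℕ} (hi : i < n + 2) :
    (sFn e n ρ)[(e n).length + i]'(by simp [sFn, hi]) = ρ (e n, i) := by
  simp [sFn, List.getElem_append_right, -List.ofFn_succ]

lemma apply_eq_getD_of_sFn_prefix (h : sFn e n ρ <+: u) {i : ℕ} (hi : i < n + 2) :
    ρ (e n, i) = u.getD ((e n).length + i) 0 := by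
  have hlt : (e n).length + i < (sFn e n ρ).length := by simp [sFn, hi]
  rw [← getElem_sFn e n ρ hi, h.getElem hlt, List.getD_eq_getElem]

lemma eq_getD_of_concat_prefix (h : t ++ [ℓ] <+: u) : ℓ = u.getD t.length 0 := by
  obtain ⟨w, rfl⟩ := h
  simp

lemma concat_prefix_sFn_of_notMem_Wset (hW : t ∉ Wset e ρ) (ht : t ++ [ℓ] <+: u)
    (hn : sFn e n ρ <+: u) : t ++ [ℓ] <+: sFn e n ρ := by
  rcases List.prefix_or_prefix_of_prefix hn ht with hle | hge
  · by_cases hlen : (sFn e n ρ).length ≤ t.length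
    · exact absurd ⟨n, List.prefix_of_prefix_length_le hle (t.prefix_append [ℓ]) hlen⟩ hW
    · have hlen' : (sFn e n ρ).length = (t ++ [ℓ]).length := by
        have := hle.length_le
        simp only [List.length_append, List.length_singleton] at this ⊢
        omega
      rw [hle.eq_of_length hlen']
  · exact hge

lemma prefix_of_concat_prefix_sFn (h : t ++ [ℓ] <+: sFn e n ρ) (hnot : ¬ t ++ [ℓ] <+: e n) :
    e n <+: t := by
  rcases List.prefix_or_prefix_of_prefix ((e n).prefix_append _) h with hle | hge
  · rcases List.prefix_concat_iff.1 hle with heq | hpre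
    · exact absurd (heq ▸ List.prefix_refl _) hnot
    · exact hpre
  · exact absurd hge hnot

lemma setOf_mem_Wset_subset (he : IsTreeEnumeration e) {n₀ : ℕ} {s : ℕ → List ℕ}
    (hs : ∀ ℓ, e n₀ ++ [ℓ] <+: s ℓ) (hW : e n₀ ∉ Wset e ρ) :
    {ℓ | s ℓ ∈ Wset e ρ} ⊆ {ℓ | ρ ∈ subtreeHits e (e n₀ ++ [ℓ]) (s ℓ)} ∪
      (fun n => (sFn e n ρ).getD (e n₀).length 0) '' Set.Iic n₀ := by
  rintro ℓ ⟨n, hn⟩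
  by_cases hnot : e n₀ ++ [ℓ] <+: e n
  · exact Or.inl ⟨n, hnot, hn⟩
  have hpre := concat_prefix_sFn_of_notMem_Wset hW (hs ℓ) hn
  exact Or.inr ⟨n, he.le_of_prefix (prefix_of_concat_prefix_sFn hpre hnot),
    (eq_getD_of_concat_prefix hpre).symm⟩

end Lists

namespace HasGeometricCylinders

variable {ν : Measure (List ℕ × ℕ → ℕ)}

lemma measure_eqOn_le (hν : HasGeometricCylinders ν) (F : Finset (List ℕ × ℕ))
    (g : List ℕ × ℕ → ℕ) :
    ν {ρ | ∀ c ∈ F, ρ c = g c} ≤ ((2 : ℝ≥0∞)⁻¹) ^ F.card := by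
  rw [hν, ← Finset.prod_const]
  exact Finset.prod_le_prod' fun c _ =>
    pow_le_of_le_one (by positivity) (by norm_num) (g c).succ_ne_zero

lemma measure_sFn_prefix_le (hν : HasGeometricCylinders ν) (e : ℕ → List ℕ) (n : ℕ)
    (u : List ℕ) :
    ν {ρ | sFn e n ρ <+: u} ≤ ((2 : ℝ≥0∞)⁻¹) ^ (n + 2) := by
  set F := (Finset.range (n + 2)).image (Prod.mk (e n))
  have hcard : F.card = n + 2 := by
    rw [Finset.card_image_of_injective _ (Prod.mk_right_injective _), Finset.card_range]
  have hsub : {ρ | sFn e n ρ <+: u} ⊆ {ρ | ∀ c ∈ F, ρ c = u.getD ((e n).length + c.2) 0} := by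
    intro ρ hρ c hc
    obtain ⟨i, hi, rfl⟩ := Finset.mem_image.1 hc
    exact apply_eq_getD_of_sFn_prefix hρ (Finset.mem_range.1 hi)
  exact (measure_mono hsub).trans (hcard ▸ hν.measure_eqOn_le F _)

lemma measure_subtreeHits_concat_le (hν : HasGeometricCylinders ν)
    {e : ℕ → List ℕ} (he : IsTreeEnumeration e) (t : List ℕ) (ℓ : ℕ) (u : List ℕ) :
    ν (subtreeHits e (t ++ [ℓ]) u) ≤ ((2 : ℝ≥0∞)⁻¹) ^ (ℓ + 1) := by
  have hsub : subtreeHits e (t ++ [ℓ]) u ⊆ ⋃ k : ℕ, {ρ | sFn e (ℓ + k) ρ <+: u} := by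
    rintro ρ ⟨n, hn, hρ⟩
    obtain ⟨k, rfl⟩ := Nat.exists_eq_add_of_le (he.le_of_concat_prefix t hn)
    exact Set.mem_iUnion.2 ⟨k, hρ⟩
  calc ν (subtreeHits e (t ++ [ℓ]) u)
      ≤ ∑' k : ℕ, ν {ρ | sFn e (ℓ + k) ρ <+: u} := (measure_mono hsub).trans (measure_iUnion_le _)
    _ ≤ ∑' k : ℕ, ((2 : ℝ≥0∞)⁻¹) ^ (ℓ + 2) * ((2 : ℝ≥0∞)⁻¹) ^ k :=
        ENNReal.tsum_le_tsum fun k => (hν.measure_sFn_prefix_le e (ℓ + k) u).trans_eq (by ring)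
    _ = ((2 : ℝ≥0∞)⁻¹) ^ (ℓ + 1) := by
        rw [ENNReal.tsum_mul_left, ENNReal.tsum_geometric_two, pow_succ _ (ℓ + 1), mul_assoc,
          ENNReal.inv_mul_cancel two_ne_zero ENNReal.ofNat_ne_top, mul_one]

lemma tsum_measure_subtreeHits_concat_ne_top (hν : HasGeometricCylinders ν)
    {e : ℕ → List ℕ} (he : IsTreeEnumeration e) (t : List ℕ) (s : ℕ → List ℕ) :
    ∑' ℓ, ν (subtreeHits e (t ++ [ℓ]) (s ℓ)) ≠ ∞ := by
  refine ne_top_of_le_ne_top ?_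
    (ENNReal.tsum_le_tsum fun ℓ => hν.measure_subtreeHits_concat_le he t ℓ (s ℓ))
  rw [ENNReal.tsum_geometric_add_one, ENNReal.one_sub_inv_two, inv_inv]
  exact ENNReal.mul_ne_top (by simp) ENNReal.ofNat_ne_top

end HasGeometricCylinders

theorem stmt2_general
    (e : ℕ → List ℕ) (hbij : Function.Bijective e)
    (hord : ∀ n ℓ, e n <+: e ℓ → e n ≠ e ℓ → n < ℓ)
    (hsuc : ∀ n ℓ t k, e n = t ++ [k] → e ℓ = t ++ [k + 1] → n < ℓ)
    (ν : Measure (List ℕ × ℕ → ℕ))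
    (hν : ∀ (F : Finset (List ℕ × ℕ)) (g : List ℕ × ℕ → ℕ),
      ν {ρ | ∀ c ∈ F, ρ c = g c} = ∏ c ∈ F, ((2 : ℝ≥0∞)⁻¹) ^ (g c + 1))
    (n₀ : ℕ) (s : ℕ → List ℕ) (hs : ∀ ℓ, e n₀ ++ [ℓ] <+: s ℓ) :
    ∀ᵐ ρ ∂ν, e n₀ ∉ Wset e ρ → {ℓ | s ℓ ∈ Wset e ρ}.Finite := by
  have he : IsTreeEnumeration e := ⟨hbij, hord, hsuc⟩
  have hν' : HasGeometricCylinders ν := hν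
  filter_upwards [ae_finite_setOfPred_mem
    (hν'.tsum_measure_subtreeHits_concat_ne_top he (e n₀) s)] with ρ hfin hW
  exact (hfin.union ((Set.finite_Iic n₀).image _)).subset (setOf_mem_Wset_subset he hs hW)

theorem stmt2
    (e : ℕ → List ℕ) (hbij : Function.Bijective e)
    (hord : ∀ n ℓ, e n <+: e ℓ → e n ≠ e ℓ → n < ℓ)
    (hsuc : ∀ n ℓ t k, e n = t ++ [k] → e ℓ = t ++ [k + 1] → n < ℓ)
    (ν : Measure (List ℕ × ℕ → ℕ)) [IsProbabilityMeasure ν]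
    (hν : ∀ (F : Finset (List ℕ × ℕ)) (g : List ℕ × ℕ → ℕ),
      ν {ρ | ∀ c ∈ F, ρ c = g c} = ∏ c ∈ F, ((2 : ℝ≥0∞)⁻¹) ^ (g c + 1))
    (n₀ : ℕ) (s : ℕ → List ℕ) (hs : ∀ ℓ, e n₀ ++ [ℓ] <+: s ℓ) :
    ∀ᵐ ρ ∂ν, e n₀ ∉ Wset e ρ → {ℓ | s ℓ ∈ Wset e ρ}.Finite :=
  stmt2_general e hbij hord hsuc ν hν n₀ s hs
end

section
/- Let κ be a set, B ⊆ κ, α ∈ κ ∖ B, and n₀ ∈ ω. Suppose A : Ω → Set ℕ and s : Ω → ℕ → ω^{<ω} are such that for each n ∈ ℕ the set {ρ : n ∈ A(ρ)} and the map ρ ↦ s(ρ)(n) are measurable with respect to the σ-algebra on Ω generated by the coordinate projections ρ ↦ ρ(β,u,i) with β ∈ B, u ∈ ω^{<ω}, i ∈ ω (i.e., they factor through the restriction map Ω → ℕ^{B×ω^{<ω}×ω}), and suppose that t_{n₀}⌢n ⊆ s(ρ)(n) for every ρ and every n ∈ A(ρ). Then for ν-almost every ρ ∈ Ω: if t_{n₀}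 ∈ U_α(ρ), then the set {n ∈ A(ρ) : s(ρ)(n) ∈ W_α(ρ)} is finite. -/
open MeasureTheory
open scoped ENNReal

/-- `sFnP e α n ρ` is the finite sequence `t_n ⌢ ⟨ρ(α,t_n,0), …, ρ(α,t_n,n+1)⟩`. -/
def sFnP {κ : Type*} (e : ℕ → List ℕ) (α : κ) (n : ℕ) (ρ : κ × List ℕ × ℕ → ℕ) : List ℕ :=
  e n ++ List.ofFn fun i : Fin (n + 2) => ρ (α, e n, (i : ℕ))

/-- `WsetP e α ρ = {s : s_{α,t_n}(ρ) ⊆ s for some n}`. -/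
def WsetP {κ : Type*} (e : ℕ → List ℕ) (α : κ) (ρ : κ × List ℕ × ℕ → ℕ) : Set (List ℕ) :=
  {s | ∃ n, sFnP e α n ρ <+: s}

/-- `UsetP e α ρ = ω^{<ω} ∖ W_α(ρ)`. -/
def UsetP {κ : Type*} (e : ℕ → List ℕ) (α : κ) (ρ : κ × List ℕ × ℕ → ℕ) : Set (List ℕ) :=
  (WsetP e α ρ)ᶜ

/-- The σ-algebra on `Ω = ℕ^{κ×ω^{<ω}×ω}` generated by the coordinate projections with
first coordinate in `B`, i.e. the pullback of the product σ-algebra under the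
restriction map `Ω → ℕ^{B×ω^{<ω}×ω}`. -/
def restrSigma {κ : Type*} (B : Set κ) : MeasurableSpace (κ × List ℕ × ℕ → ℕ) :=
  MeasurableSpace.comap
    (fun (ρ : κ × List ℕ × ℕ → ℕ) (c : B × List ℕ × ℕ) => ρ ((c.1 : κ), c.2.1, c.2.2))
    inferInstance

/-!
For each `n`, let `E n` be the event that `s_{α,t_m}(ρ) ⊆ s(ρ)(n)` for some `m` with
`t_{n₀}⌢n ⊆ t_m`. The list `s(ρ)(n)` depends only on the coordinates in `B`, while
`s_{α,t_m}(ρ)` reads the `m + 2` independent coordinates `ρ(α,t_m,i)`, so each such `m`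
contributes probability at most `2^{-(m+2)}`; as the enumeration forces `m ≥ n`, this gives
`ν(E n) ≤ 2^{-(n+1)}`, and by Borel–Cantelli almost every `ρ` lies in only finitely many `E n`.

Now let `t_{n₀} ∈ U_α(ρ)`, `n ∈ A(ρ)` and `s_{α,t_m}(ρ) ⊆ s(ρ)(n)`. Both `t_{n₀}⌢n` and
`s_{α,t_m}(ρ)` are initial segments of `s(ρ)(n)` and `s_{α,t_m}(ρ) ⊄ t_{n₀}`, hence
`t_{n₀}⌢n ⊆ s_{α,t_m}(ρ)`. Either `t_{n₀}⌢n ⊆ t_m`, so that `ρ ∈ E n`, or `t_m ⊆ t_{n₀}`, so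
that `m ≤ n₀` and `n` is the `|t_{n₀}|`-th entry of `s_{α,t_m}(ρ)`: finitely many `n` in all.
-/

open ProbabilityTheory

namespace List

variable {β : Type*}

theorem getD_of_append_prefix {l₁ l₂ u : List β} (h : l₁ ++ l₂ <+: u) {i : ℕ}
    (hi : i < l₂.length) (d : β) : u.getD (l₁.length + i) d = l₂[i] := by
  have hlt : l₁.length + i < (l₁ ++ l₂).length := by simpa using hi
  rw [getD_eq_getElem _ _ (hlt.trans_le h.length_le), ← h.getElem hlt,
    getElem_append_right (Nat.le_add_right _ _)]
  simp

theorem concat_prefix_of_prefix_of_not_prefix {t q u : List β} {n : β} (hq : q <+: u)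
    (ht : t ++ [n] <+: u) (hqt : ¬ q <+: t) : t ++ [n] <+: q := by
  rcases prefix_or_prefix_of_prefix hq ht with h | h
  · rcases prefix_concat_iff.mp h with rfl | h
    · exact prefix_refl _
    · exact absurd h hqt
  · exact h

theorem prefix_of_concat_prefix_append {t p r : List β} {n : β} (h : t ++ [n] <+: p ++ r)
    (hp : ¬ t ++ [n] <+: p) : p <+: t := by
  rcases prefix_or_prefix_of_prefix (prefix_append p r) h with h' | h'
  · rcases prefix_concat_iff.mp h' with rfl | h'
    · exact absurd (prefix_refl _) hp
    · exact h'
  · exact absurd h' hp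

end List

theorem le_of_enum_prefix {e : ℕ → List ℕ} (hinj : Function.Injective e)
    (hord : ∀ n ℓ, e n <+: e ℓ → e n ≠ e ℓ → n < ℓ) {m ℓ : ℕ} (h : e m <+: e ℓ) : m ≤ ℓ := by
  by_cases heq : e m = e ℓ
  · exact (hinj heq).le
  · exact (hord m ℓ h heq).le

theorem le_of_enum_concat_prefix {e : ℕ → List ℕ} (hbij : Function.Bijective e)
    (hord : ∀ n ℓ, e n <+: e ℓ → e n ≠ e ℓ → n < ℓ)
    (hsuc : ∀ n ℓ t k, e n = t ++ [k] → e ℓ = t ++ [k + 1] → n < ℓ)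
    {t : List ℕ} {n m : ℕ} (h : t ++ [n] <+: e m) : n ≤ m := by
  choose idx hidx using fun k : ℕ ↦ hbij.2 (t ++ [k])
  have hmono : StrictMono idx :=
    strictMono_nat_of_lt_succ fun k ↦ hsuc _ _ t k (hidx k) (hidx (k + 1))
  exact hmono.le_apply.trans (le_of_enum_prefix hbij.1 hord (by rwa [hidx n]))

theorem iIndepFun_eval_of_measure_cylinder {ι β : Type*} [MeasurableSpace β]
    [MeasurableSingletonClass β] [Countable β] [Nonempty β] {ν : Measure (ι → β)}
    (w : ι → β → ℝ≥0∞)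
    (hν : ∀ (F : Finset ι) (g : ι → β), ν {ρ | ∀ c ∈ F, ρ c = g c} = ∏ c ∈ F, w c (g c)) :
    iIndepFun (fun c ρ ↦ ρ c) ν := by
  rw [iIndepFun_iff_iIndep]
  refine iIndepSets.iIndep (fun c ↦ (measurable_pi_apply c).comap_le)
    (fun c ↦ Set.range fun k ↦ {ρ | ρ c = k}) ?_ (fun c ↦ le_antisymm ?_ ?_) ?_
  · rintro c _ ⟨k, rfl⟩ _ ⟨k', rfl⟩ ⟨ρ, h, h'⟩
    obtain rfl : k = k' := h.symm.trans h'
    exact ⟨k, (Set.inter_self _).symm⟩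
  · rintro _ ⟨t, -, rfl⟩
    rw [← Set.biUnion_of_singleton t, Set.preimage_iUnion₂]
    exact .biUnion t.to_countable fun k _ ↦
      MeasurableSpace.measurableSet_generateFrom ⟨k, rfl⟩
  · refine MeasurableSpace.generateFrom_le ?_
    rintro _ ⟨k, rfl⟩
    exact ⟨{k}, measurableSet_singleton k, rfl⟩
  · rw [iIndepSets_iff]
    intro F f hf
    choose! g hg using hf
    have hinter : ⋂ c ∈ F, f c = {ρ | ∀ c ∈ F, ρ c = g c} := by
      ext ρ
      simp +contextual [← hg]
    rw [hinter, hν]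
    refine Finset.prod_congr rfl fun c hc ↦ ?_
    simpa [← hg c hc] using (hν {c} g).symm

theorem measure_cylinder_le {ι : Type*} {ν : Measure (ι → ℕ)}
    (hν : ∀ (F : Finset ι) (g : ι → ℕ),
      ν {ρ | ∀ c ∈ F, ρ c = g c} = ∏ c ∈ F, ((2 : ℝ≥0∞)⁻¹) ^ (g c + 1))
    (F : Finset ι) (g : ι → ℕ) :
    ν {ρ | ∀ c ∈ F, ρ c = g c} ≤ 2⁻¹ ^ F.card := by
  rw [hν, ← Finset.prod_const]
  exact Finset.prod_le_prod' fun c _ ↦ pow_le_of_le_one (by simp) (by simp) (by simp)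

theorem restrSigma_le {κ : Type*} (B : Set κ) :
    restrSigma B ≤ (inferInstance : MeasurableSpace (κ × List ℕ × ℕ → ℕ)) :=
  (measurable_pi_lambda _ fun _ ↦ measurable_pi_apply _).comap_le

theorem measure_inter_cylinder_eq_mul {κ : Type*} {ν : Measure (κ × List ℕ × ℕ → ℕ)}
    (hind : iIndepFun (fun c (ρ : κ × List ℕ × ℕ → ℕ) ↦ ρ c) ν)
    {B : Set κ} {S : Set (κ × List ℕ × ℕ → ℕ)} (hS : MeasurableSet[restrSigma B] S)
    {F : Finset (κ × List ℕ × ℕ)} (hF : ∀ c ∈ F, c.1 ∉ B) (g : κ × List ℕ × ℕ → ℕ) :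
    ν (S ∩ {ρ | ∀ c ∈ F, ρ c = g c}) = ν S * ν {ρ | ∀ c ∈ F, ρ c = g c} := by
  let m : κ × List ℕ × ℕ → MeasurableSpace (κ × List ℕ × ℕ → ℕ) := fun c ↦
    MeasurableSpace.comap (fun ρ ↦ ρ c) inferInstance
  have hindep := indep_iSup_of_disjoint (m := m) (fun c ↦ (measurable_pi_apply c).comap_le)
    hind.iIndep (S := {c | c.1 ∈ B}) (T := {c | c.1 ∉ B})
    (Set.disjoint_left.mpr fun _ h h' ↦ h' h)
  refine (Indep_iff _ _ ν).mp hindep S _ ?_ ?_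
  · refine (?_ : restrSigma B ≤ _) _ hS
    simp only [restrSigma, MeasurableSpace.pi, MeasurableSpace.comap_iSup,
      MeasurableSpace.comap_comp]
    exact iSup_le fun d ↦
      le_iSup₂_of_le (f := fun c (_ : c ∈ {c : κ × List ℕ × ℕ | c.1 ∈ B}) ↦ m c)
        ((d.1 : κ), d.2.1, d.2.2) d.1.2 le_rfl
  · have hcyl : {ρ : κ × List ℕ × ℕ → ℕ | ∀ c ∈ F, ρ c = g c}
        = ⋂ c ∈ F, (fun ρ ↦ ρ c) ⁻¹' {g c} := by
      ext ρ; simp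
    rw [hcyl]
    exact .biInter F.countable_toSet fun c hc ↦
      le_iSup₂ (f := fun c (_ : c ∈ {c : κ × List ℕ × ℕ | c.1 ∉ B}) ↦ m c) c (hF c hc) _
        ⟨{g c}, measurableSet_singleton _, rfl⟩

section RandomSequence

variable {κ : Type*} (e : ℕ → List ℕ) (α : κ)

def sFnPCoords (m : ℕ) : Finset (κ × List ℕ × ℕ) :=
  (Finset.range (m + 2)).map ⟨fun i ↦ (α, e m, i), fun _ _ h ↦ by simpa using h⟩

theorem card_sFnPCoords (m : ℕ) : (sFnPCoords e α m).card = m + 2 := by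
  simp [sFnPCoords]

theorem sFnP_prefix_subset_cylinder (m : ℕ) (u : List ℕ) :
    {ρ | sFnP e α m ρ <+: u} ⊆
      {ρ | ∀ c ∈ sFnPCoords e α m, ρ c = u.getD ((e m).length + c.2.2) 0} := by
  intro ρ h c hc
  obtain ⟨i, hi, rfl⟩ := Finset.mem_map.mp hc
  show ρ (α, e m, i) = u.getD ((e m).length + i) 0
  rw [List.getD_of_append_prefix h (by simpa [Nat.lt_succ_iff] using hi) 0, List.getElem_ofFn]

end RandomSequence

section Bounds

variable {κ : Type*} {ν : Measure (κ × List ℕ × ℕ → ℕ)} [IsProbabilityMeasure ν]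
  {B : Set κ} {α : κ} {σ : (κ × List ℕ × ℕ → ℕ) → List ℕ}

theorem measure_sFnP_prefix_le (hind : iIndepFun (fun c (ρ : κ × List ℕ × ℕ → ℕ) ↦ ρ c) ν)
    (hν : ∀ (F : Finset (κ × List ℕ × ℕ)) (g : κ × List ℕ × ℕ → ℕ),
      ν {ρ | ∀ c ∈ F, ρ c = g c} = ∏ c ∈ F, ((2 : ℝ≥0∞)⁻¹) ^ (g c + 1))
    (hα : α ∉ B) (hσ : ∀ u, MeasurableSet[restrSigma B] {ρ | σ ρ = u})
    (e : ℕ → List ℕ) (m : ℕ) :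
    ν {ρ | sFnP e α m ρ <+: σ ρ} ≤ 2⁻¹ ^ (m + 2) := by
  set cyl : List ℕ → Set (κ × List ℕ × ℕ → ℕ) := fun u ↦
    {ρ | ∀ c ∈ sFnPCoords e α m, ρ c = u.getD ((e m).length + c.2.2) 0}
  have hcoords : ∀ c ∈ sFnPCoords e α m, c.1 ∉ B := by
    intro c hc
    obtain ⟨i, -, rfl⟩ := Finset.mem_map.mp hc
    exact hα
  have hfibers : Pairwise (Function.onFun Disjoint fun u ↦ {ρ | σ ρ = u}) :=
    fun u v huv ↦ Set.disjoint_left.mpr fun ρ (hu : σ ρ = u) (hv : σ ρ = v) ↦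
      huv (hu.symm.trans hv)
  calc ν {ρ | sFnP e α m ρ <+: σ ρ} ≤ ν (⋃ u, {ρ | σ ρ = u} ∩ cyl u) :=
        measure_mono fun ρ h ↦ Set.mem_iUnion.mpr
          ⟨σ ρ, rfl, sFnP_prefix_subset_cylinder e α m (σ ρ) h⟩
    _ ≤ ∑' u, ν ({ρ | σ ρ = u} ∩ cyl u) := measure_iUnion_le _
    _ = ∑' u, ν {ρ | σ ρ = u} * ν (cyl u) :=
        tsum_congr fun u ↦ measure_inter_cylinder_eq_mul hind (hσ u) hcoords _
    _ ≤ ∑' u, ν {ρ | σ ρ = u} * 2⁻¹ ^ (m + 2) := by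
        gcongr with u
        rw [← card_sFnPCoords e α m]
        exact measure_cylinder_le hν _ _
    _ = ν (⋃ u, {ρ | σ ρ = u}) * 2⁻¹ ^ (m + 2) := by
        rw [ENNReal.tsum_mul_right, measure_iUnion hfibers fun u ↦ restrSigma_le B _ (hσ u)]
    _ ≤ 2⁻¹ ^ (m + 2) := mul_le_of_le_one_left' prob_le_one

theorem measure_exists_sFnP_prefix_le
    (hind : iIndepFun (fun c (ρ : κ × List ℕ × ℕ → ℕ) ↦ ρ c) ν)
    (hν : ∀ (F : Finset (κ × List ℕ × ℕ)) (g : κ × List ℕ × ℕ → ℕ),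
      ν {ρ | ∀ c ∈ F, ρ c = g c} = ∏ c ∈ F, ((2 : ℝ≥0∞)⁻¹) ^ (g c + 1))
    (hα : α ∉ B) (hσ : ∀ u, MeasurableSet[restrSigma B] {ρ | σ ρ = u})
    {e : ℕ → List ℕ} {t : List ℕ} {n : ℕ} (hle : ∀ m, t ++ [n] <+: e m → n ≤ m) :
    ν {ρ | ∃ m, t ++ [n] <+: e m ∧ sFnP e α m ρ <+: σ ρ} ≤ 2⁻¹ ^ (n + 1) := by
  calc ν {ρ | ∃ m, t ++ [n] <+: e m ∧ sFnP e α m ρ <+: σ ρ}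
      ≤ ν (⋃ k, {ρ | sFnP e α (n + k) ρ <+: σ ρ}) := by
        refine measure_mono ?_
        rintro ρ ⟨m, hm, h⟩
        exact Set.mem_iUnion.mpr ⟨m - n, by rwa [Nat.add_sub_cancel' (hle m hm)]⟩
    _ ≤ ∑' k, (2⁻¹ : ℝ≥0∞) ^ (n + k + 2) :=
        (measure_iUnion_le _).trans
          (ENNReal.tsum_le_tsum fun k ↦ measure_sFnP_prefix_le hind hν hα hσ e (n + k))
    _ = 2⁻¹ ^ (n + 1) := by
        simp_rw [add_right_comm n _ 2, pow_add _ (n + 2), ENNReal.tsum_mul_left,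
          ENNReal.tsum_geometric, ENNReal.one_sub_inv_two, inv_inv, pow_succ, mul_assoc,
          ENNReal.inv_mul_cancel two_ne_zero ENNReal.ofNat_ne_top, mul_one]

end Bounds

theorem stmt3_general {κ : Type*}
    (e : ℕ → List ℕ) (hbij : Function.Bijective e)
    (hord : ∀ n ℓ, e n <+: e ℓ → e n ≠ e ℓ → n < ℓ)
    (hsuc : ∀ n ℓ t k, e n = t ++ [k] → e ℓ = t ++ [k + 1] → n < ℓ)
    (ν : Measure (κ × List ℕ × ℕ → ℕ)) [IsProbabilityMeasure ν]
    (hν : ∀ (F : Finset (κ × List ℕ × ℕ)) (g : κ × List ℕ × ℕ → ℕ),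
      ν {ρ | ∀ c ∈ F, ρ c = g c} = ∏ c ∈ F, ((2 : ℝ≥0∞)⁻¹) ^ (g c + 1))
    (B : Set κ) (α : κ) (hα : α ∉ B) (n₀ : ℕ)
    (A : (κ × List ℕ × ℕ → ℕ) → Set ℕ)
    (s : (κ × List ℕ × ℕ → ℕ) → ℕ → List ℕ)
    (hsm : ∀ (n : ℕ) (u : List ℕ), MeasurableSet[restrSigma B] {ρ | s ρ n = u})
    (hext : ∀ ρ, ∀ n ∈ A ρ, e n₀ ++ [n] <+: s ρ n) :
    ∀ᵐ ρ ∂ν, e n₀ ∈ UsetP e α ρ → {n | n ∈ A ρ ∧ s ρ n ∈ WsetP e α ρ}.Finite := by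
  have hind := iIndepFun_eval_of_measure_cylinder (fun _ k ↦ 2⁻¹ ^ (k + 1)) hν
  have hbound : ∀ n, ν {ρ | ∃ m, e n₀ ++ [n] <+: e m ∧ sFnP e α m ρ <+: s ρ n} ≤ 2⁻¹ ^ (n + 1) :=
    fun n ↦ measure_exists_sFnP_prefix_le hind hν hα (hsm n)
      fun _ ↦ le_of_enum_concat_prefix hbij hord hsuc
  have hsum : ∑' n, (2⁻¹ : ℝ≥0∞) ^ (n + 1) ≠ ⊤ := by
    simp_rw [pow_succ, ENNReal.tsum_mul_right, ENNReal.tsum_geometric, ENNReal.one_sub_inv_two,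
      inv_inv]
    exact ENNReal.mul_ne_top (by simp) (by simp)
  filter_upwards [ae_eventually_notMem (ne_top_of_le_ne_top hsum (ENNReal.tsum_le_tsum hbound))]
    with ρ hρ hU
  obtain ⟨N, hN⟩ := Filter.eventually_atTop.mp hρ
  refine ((Set.finite_Iio N).union ((Set.finite_Iic n₀).image
    fun m ↦ (sFnP e α m ρ).getD (e n₀).length 0)).subset ?_
  rintro n ⟨hnA, m, hm⟩
  have hpre := List.concat_prefix_of_prefix_of_not_prefix hm (hext ρ n hnA) fun h ↦ hU ⟨m, h⟩
  by_cases hnm : e n₀ ++ [n] <+: e m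
  · exact .inl (not_le.mp fun hNn ↦ hN n hNn ⟨m, hnm, hm⟩)
  · refine .inr ⟨m, le_of_enum_prefix hbij.1 hord
      (List.prefix_of_concat_prefix_append hpre hnm), ?_⟩
    simpa using List.getD_of_append_prefix hpre (i := 0) (by simp) 0

theorem stmt3 {κ : Type*}
    (e : ℕ → List ℕ) (hbij : Function.Bijective e)
    (hord : ∀ n ℓ, e n <+: e ℓ → e n ≠ e ℓ → n < ℓ)
    (hsuc : ∀ n ℓ t k, e n = t ++ [k] → e ℓ = t ++ [k + 1] → n < ℓ)
    (ν : Measure (κ × List ℕ × ℕ → ℕ)) [IsProbabilityMeasure ν]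
    (hν : ∀ (F : Finset (κ × List ℕ × ℕ)) (g : κ × List ℕ × ℕ → ℕ),
      ν {ρ | ∀ c ∈ F, ρ c = g c} = ∏ c ∈ F, ((2 : ℝ≥0∞)⁻¹) ^ (g c + 1))
    (B : Set κ) (α : κ) (hα : α ∉ B) (n₀ : ℕ)
    (A : (κ × List ℕ × ℕ → ℕ) → Set ℕ)
    (s : (κ × List ℕ × ℕ → ℕ) → ℕ → List ℕ)
    (hA : ∀ n : ℕ, MeasurableSet[restrSigma B] {ρ | n ∈ A ρ})
    (hsm : ∀ (n : ℕ) (u : List ℕ), MeasurableSet[restrSigma B] {ρ | s ρ n = u})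
    (hext : ∀ ρ, ∀ n ∈ A ρ, e n₀ ++ [n] <+: s ρ n) :
    ∀ᵐ ρ ∂ν, e n₀ ∈ UsetP e α ρ → {n | n ∈ A ρ ∧ s ρ n ∈ WsetP e α ρ}.Finite :=
  stmt3_general e hbij hord hsuc ν hν B α hα n₀ A s hsm hext
end

section
/- Let κ be a set, t ∈ ω^{<ω}, α₀ ∈ κ, and let F ⊆ κ be a finite set with α₀ ∉ F. Then for ν-almost every ρ ∈ Ω, the point t belongs to the closure of W_{α₀}(ρ) with respect to the topology on ω^{<ω} generated by τ₀ ∪ {U_α(ρ) : α ∈ F}; equivalently, no neighborhood of t in that topology is contained in U_{α₀}(ρ). -/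
open MeasureTheory
open scoped ENNReal

/-- The cone `[t] = {s : t ⊆ s}`. -/
def cone (t : List ℕ) : Set (List ℕ) := {s | t <+: s}

/-- The subbasis for the topology `τ₀`: all cones and all complements of cones. -/
def subbasis0 : Set (Set (List ℕ)) :=
  {C | ∃ t, C = cone t} ∪ {C | ∃ t, C = (cone t)ᶜ}

/-- The topology `τ₀` on `ω^{<ω}`. -/
def tau0 : TopologicalSpace (List ℕ) := TopologicalSpace.generateFrom subbasis0

/-!
Let `x_j = s_{α₀, t⌢j}`, a point of `W_{α₀}`; we show `x_j → t` in the refined topology as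
`j → ∞`. Every cone containing `t` contains `x_j`, and `x_j` lies in a cone `[u]` with `u ⊈ t`
only if `t⌢j ⊆ u`, i.e. for at most one `j`. If `t ∈ U_α`, then `x_j ∈ W_α` forces either that
`j = ρ(α, u, |t| - |u|)` for some `u ⊆ t`, or that `s_{α, t⌢j} = s_{α₀, t⌢j}`. For `α ≠ α₀` the
coincidence `s_{α, t_m} = s_{α₀, t_m}` has probability at most `2^{-(m+2)}`, so by Borel–Cantelli
it almost surely happens for only finitely many `m`.
-/

open Filter TopologicalSpace

theorem ENNReal.tsum_pi_fin_prod {α : Type*} (f : α → ℝ≥0∞) :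
    ∀ N, ∑' g : Fin N → α, ∏ i, f (g i) = (∑' a, f a) ^ N
  | 0 => by simp
  | N + 1 => by
    rw [← (Fin.consEquiv fun _ => α).tsum_eq, pow_succ', ← ENNReal.tsum_pi_fin_prod f N,
      ← ENNReal.tsum_mul_right]
    simp only [Fin.consEquiv, Equiv.coe_fn_mk, Fin.prod_univ_succ, Fin.cons_zero, Fin.cons_succ]
    rw [ENNReal.tsum_prod']
    simp_rw [ENNReal.tsum_mul_left]

theorem tsum_two_inv_pow_succ_mul_self_le :
    ∑' m : ℕ, (2⁻¹ : ℝ≥0∞) ^ (m + 1) * 2⁻¹ ^ (m + 1) ≤ 2⁻¹ :=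
  calc ∑' m : ℕ, (2⁻¹ : ℝ≥0∞) ^ (m + 1) * 2⁻¹ ^ (m + 1)
      ≤ ∑' m : ℕ, 2⁻¹ * (2⁻¹ : ℝ≥0∞) ^ (m + 1) := by
        gcongr
        exact pow_le_of_le_one zero_le (by norm_num) (Nat.succ_ne_zero _)
    _ = 2⁻¹ := by
        rw [ENNReal.tsum_mul_left, ENNReal.tsum_geometric_add_one, ENNReal.one_sub_inv_two,
          inv_inv, ENNReal.inv_mul_cancel two_ne_zero ENNReal.ofNat_ne_top, mul_one]

theorem measure_coords_agree_le {κ : Type*} {ν : Measure (κ × List ℕ × ℕ → ℕ)}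
    (hν : ∀ (F : Finset (κ × List ℕ × ℕ)) (g : κ × List ℕ × ℕ → ℕ),
      ν {ρ | ∀ c ∈ F, ρ c = g c} = ∏ c ∈ F, ((2 : ℝ≥0∞)⁻¹) ^ (g c + 1))
    {α β : κ} (hαβ : α ≠ β) (u : List ℕ) (N : ℕ) :
    ν {ρ | ∀ i < N, ρ (α, u, i) = ρ (β, u, i)} ≤ 2⁻¹ ^ N := by
  classical
  let S : Finset (κ × List ℕ × ℕ) := {α, β} ×ˢ {u} ×ˢ Finset.range N
  let extend (g : Fin N → ℕ) (c : κ × List ℕ × ℕ) : ℕ :=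
    if h : c.2.2 < N then g ⟨c.2.2, h⟩ else 0
  -- cover the event by the countably many cylinders on which both rows follow a common pattern `g`
  have hcover : {ρ : κ × List ℕ × ℕ → ℕ | ∀ i < N, ρ (α, u, i) = ρ (β, u, i)} ⊆
      ⋃ g : Fin N → ℕ, {ρ | ∀ c ∈ S, ρ c = extend g c} := by
    intro ρ hρ
    refine Set.mem_iUnion.2 ⟨fun i => ρ (β, u, i), ?_⟩
    simp only [S, extend, Finset.mem_product, Finset.mem_insert, Finset.mem_singleton,
      Finset.mem_range]
    rintro ⟨γ, v, i⟩ ⟨rfl | rfl, rfl, hi⟩ <;> simp [hi, hρ i hi]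
  have hcyl (g : Fin N → ℕ) : ν {ρ | ∀ c ∈ S, ρ c = extend g c} =
      ∏ i, (2⁻¹ : ℝ≥0∞) ^ (g i + 1) * 2⁻¹ ^ (g i + 1) := by
    rw [hν, Finset.prod_product, Finset.prod_pair hαβ, ← Finset.prod_mul_distrib,
      Finset.singleton_product, Finset.prod_map, ← Fin.prod_univ_eq_prod_range]
    simp [extend]
  calc ν {ρ | ∀ i < N, ρ (α, u, i) = ρ (β, u, i)}
      ≤ ∑' g : Fin N → ℕ, ν {ρ | ∀ c ∈ S, ρ c = extend g c} :=
        (measure_mono hcover).trans (measure_iUnion_le _)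
    _ = (∑' m : ℕ, (2⁻¹ : ℝ≥0∞) ^ (m + 1) * 2⁻¹ ^ (m + 1)) ^ N := by
        simp_rw [hcyl]
        exact ENNReal.tsum_pi_fin_prod (fun m => (2⁻¹ : ℝ≥0∞) ^ (m + 1) * 2⁻¹ ^ (m + 1)) N
    _ ≤ 2⁻¹ ^ N := by gcongr; exact tsum_two_inv_pow_succ_mul_self_le

section Coincidence

variable {κ : Type*} (e : ℕ → List ℕ)

theorem sFnP_eq_sFnP_iff {α β : κ} {m : ℕ} {ρ : κ × List ℕ × ℕ → ℕ} :
    sFnP e α m ρ = sFnP e β m ρ ↔ ∀ i < m + 2, ρ (α, e m, i) = ρ (β, e m, i) := by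
  simp only [sFnP, List.append_cancel_left_eq, List.ofFn_inj, funext_iff, Fin.forall_iff]

theorem ae_finite_setOf_sFnP_eq {ν : Measure (κ × List ℕ × ℕ → ℕ)}
    (hν : ∀ (F : Finset (κ × List ℕ × ℕ)) (g : κ × List ℕ × ℕ → ℕ),
      ν {ρ | ∀ c ∈ F, ρ c = g c} = ∏ c ∈ F, ((2 : ℝ≥0∞)⁻¹) ^ (g c + 1))
    {α β : κ} (hαβ : α ≠ β) :
    ∀ᵐ ρ ∂ν, {m | sFnP e α m ρ = sFnP e β m ρ}.Finite := by
  have hsum : ∑' m, ν {ρ | sFnP e α m ρ = sFnP e β m ρ} ≠ ∞ := by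
    refine ne_top_of_le_ne_top (by simp : ∑' m : ℕ, (2⁻¹ : ℝ≥0∞) ^ m ≠ ∞) ?_
    refine ENNReal.tsum_le_tsum fun m => ?_
    simp_rw [sFnP_eq_sFnP_iff]
    exact (measure_coords_agree_le hν hαβ _ _).trans
      (pow_le_pow_right_of_le_one' (by norm_num) (by omega))
  filter_upwards [ae_eventually_notMem hsum] with ρ hρ
  rw [← Nat.cofinite_eq_atTop, eventually_cofinite] at hρ
  simpa using hρ

end Coincidence

theorem List.append_singleton_prefix_of_prefix {α : Type*} {p q t : List α} {a : α}
    (hp : p <+: q) (hq : t ++ [a] <+: q) (ht : ¬ p <+: t) : t ++ [a] <+: p := by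
  rcases List.prefix_or_prefix_of_prefix hp hq with h | h
  · rcases List.prefix_concat_iff.1 h with rfl | h
    · exact List.prefix_refl _
    · exact absurd h ht
  · exact h

theorem List.subsingleton_setOf_append_singleton_prefix {α : Type*} (t u : List α) :
    {a | t ++ [a] <+: u}.Subsingleton := by
  intro a ha b hb
  have h := (List.prefix_or_prefix_of_prefix ha hb).elim (·.eq_of_length (by simp))
    (fun h => (h.eq_of_length (by simp)).symm)
  simpa using h

section Deterministic

variable {κ : Type*} {e : ℕ → List ℕ}

theorem index_le_of_prefix (hinj : Function.Injective e)
    (hord : ∀ n ℓ, e n <+: e ℓ → e n ≠ e ℓ → n < ℓ) {m m' : ℕ} (h : e m' <+: e m) : m' ≤ m := by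
  by_cases heq : e m' = e m
  · exact (hinj heq).le
  · exact (hord m' m h heq).le

theorem getElem_sFnP {α : κ} {m : ℕ} {ρ : κ × List ℕ × ℕ → ℕ} {k : ℕ} (hk : (e m).length ≤ k)
    (hk' : k < (sFnP e α m ρ).length) :
    (sFnP e α m ρ)[k] = ρ (α, e m, k - (e m).length) := by
  simp only [sFnP]
  rw [List.getElem_append_right hk, List.getElem_ofFn]

theorem sFnP_prefix_sFnP (hinj : Function.Injective e)
    (hord : ∀ n ℓ, e n <+: e ℓ → e n ≠ e ℓ → n < ℓ) {α β : κ} {ρ : κ × List ℕ × ℕ → ℕ}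
    {t : List ℕ} {j m m' : ℕ} (hm' : e m' = t ++ [j]) (ht : ¬ sFnP e α m ρ <+: t)
    (h : sFnP e α m ρ <+: sFnP e β m' ρ) :
    j ∈ t.inits.map (fun u => ρ (α, u, t.length - u.length)) ∨
      sFnP e α m' ρ = sFnP e β m' ρ := by
  have htj : t ++ [j] <+: sFnP e α m ρ :=
    List.append_singleton_prefix_of_prefix h (hm' ▸ List.prefix_append _ _) ht
  by_cases hmt : e m <+: t
  · refine .inl (List.mem_map.2 ⟨e m, List.mem_inits _ _ |>.2 hmt, ?_⟩)
    have hlt : t.length < (t ++ [j]).length := by simp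
    rw [← getElem_sFnP hmt.length_le (htj.length_le.trans_lt' hlt), ← htj.getElem hlt]
    simp
  · have hpre : e m' <+: e m :=
      hm' ▸ List.append_singleton_prefix_of_prefix (List.prefix_append _ _) htj hmt
    -- `|s_{α,t_m}| = |t_m| + m + 2` grows with both `t_m` and `m`, so `s_{α,t_m} ⊆ s_{β,t_m'}`
    -- together with `t_m' ⊆ t_m` (hence `m' ≤ m`) forces `m = m'`
    have hle := index_le_of_prefix hinj hord hpre
    have hlen := h.length_le
    simp only [sFnP, List.length_append, List.length_ofFn] at hlen
    obtain rfl : m = m' := by have := hpre.length_le; omega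
    exact .inr (h.eq_of_length (by simp [sFnP]))

theorem tendsto_sFnP_append_singleton (hinj : Function.Injective e)
    (hord : ∀ n ℓ, e n <+: e ℓ → e n ≠ e ℓ → n < ℓ) {β : κ} {F : Set κ}
    {ρ : κ × List ℕ × ℕ → ℕ} (hfin : ∀ α ∈ F, {m | sFnP e α m ρ = sFnP e β m ρ}.Finite)
    {t : List ℕ} {n : ℕ → ℕ} (hn : ∀ j, e (n j) = t ++ [j]) :
    Tendsto (fun j => sFnP e β (n j) ρ) cofinite
      (@nhds _ (generateFrom (subbasis0 ∪ (fun α => UsetP e α ρ) '' F)) t) := by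
  have hx (j : ℕ) : t ++ [j] <+: sFnP e β (n j) ρ := hn j ▸ List.prefix_append _ _
  rw [tendsto_nhds_generateFrom_iff]
  rintro _ ((⟨u, rfl⟩ | ⟨u, rfl⟩) | ⟨α, hα, rfl⟩) ht
  · exact univ_mem' fun j => ht.trans ((List.prefix_append _ _).trans (hx j))
  · refine mem_cofinite.2 ((List.subsingleton_setOf_append_singleton_prefix t u).finite.subset ?_)
    intro j hj
    exact List.append_singleton_prefix_of_prefix (not_not.1 hj) (hx j) ht
  · have hn_inj : Function.Injective n := fun j j' h => by
      simpa [hn] using congrArg e h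
    refine mem_cofinite.2 <| ((List.finite_toSet
      (t.inits.map fun u => ρ (α, u, t.length - u.length))).union
      ((hfin α hα).preimage hn_inj.injOn)).subset ?_
    rintro j hj
    obtain ⟨m, hm⟩ := not_not.1 hj
    exact sFnP_prefix_sFnP hinj hord (hn j) (fun h => ht ⟨m, h⟩) hm

theorem mem_closure_WsetP (hinj : Function.Injective e)
    (hord : ∀ n ℓ, e n <+: e ℓ → e n ≠ e ℓ → n < ℓ) {β : κ} {F : Set κ}
    {ρ : κ × List ℕ × ℕ → ℕ} (hfin : ∀ α ∈ F, {m | sFnP e α m ρ = sFnP e β m ρ}.Finite)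
    {t : List ℕ} {n : ℕ → ℕ} (hn : ∀ j, e (n j) = t ++ [j]) :
    t ∈ @closure _ (generateFrom (subbasis0 ∪ (fun α => UsetP e α ρ) '' F)) (WsetP e β ρ) :=
  letI := generateFrom (subbasis0 ∪ (fun α => UsetP e α ρ) '' F)
  mem_closure_of_tendsto (tendsto_sFnP_append_singleton hinj hord hfin hn)
    (Eventually.of_forall fun j => ⟨n j, List.prefix_refl _⟩)

end Deterministic

theorem stmt4_general {κ : Type*}
    (e : ℕ → List ℕ) (hbij : Function.Bijective e)
    (hord : ∀ n ℓ, e n <+: e ℓ → e n ≠ e ℓ → n < ℓ)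
    (ν : Measure (κ × List ℕ × ℕ → ℕ))
    (hν : ∀ (F : Finset (κ × List ℕ × ℕ)) (g : κ × List ℕ × ℕ → ℕ),
      ν {ρ | ∀ c ∈ F, ρ c = g c} = ∏ c ∈ F, ((2 : ℝ≥0∞)⁻¹) ^ (g c + 1))
    (t : List ℕ) (α₀ : κ) (F : Set κ) (hF : F.Finite) (hα₀ : α₀ ∉ F) :
    ∀ᵐ ρ ∂ν,
      t ∈ @closure _
        (TopologicalSpace.generateFrom (subbasis0 ∪ ((fun α => UsetP e α ρ) '' F)))
        (WsetP e α₀ ρ) := by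
  choose n hn using fun j => hbij.surjective (t ++ [j])
  have hfin : ∀ᵐ ρ ∂ν, ∀ α ∈ F, {m | sFnP e α m ρ = sFnP e α₀ m ρ}.Finite :=
    (ae_ball_iff hF.countable).2 fun α hα =>
      ae_finite_setOf_sFnP_eq e hν (ne_of_mem_of_not_mem hα hα₀)
  filter_upwards [hfin] with ρ hρ
  exact mem_closure_WsetP hbij.injective hord hρ hn

theorem stmt4 {κ : Type*}
    (e : ℕ → List ℕ) (hbij : Function.Bijective e)
    (hord : ∀ n ℓ, e n <+: e ℓ → e n ≠ e ℓ → n < ℓ)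
    (hsuc : ∀ n ℓ t k, e n = t ++ [k] → e ℓ = t ++ [k + 1] → n < ℓ)
    (ν : Measure (κ × List ℕ × ℕ → ℕ)) [IsProbabilityMeasure ν]
    (hν : ∀ (F : Finset (κ × List ℕ × ℕ)) (g : κ × List ℕ × ℕ → ℕ),
      ν {ρ | ∀ c ∈ F, ρ c = g c} = ∏ c ∈ F, ((2 : ℝ≥0∞)⁻¹) ^ (g c + 1))
    (t : List ℕ) (α₀ : κ) (F : Set κ) (hF : F.Finite) (hα₀ : α₀ ∉ F) :
    ∀ᵐ ρ ∂ν,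
      t ∈ @closure _
        (TopologicalSpace.generateFrom (subbasis0 ∪ ((fun α => UsetP e α ρ) '' F)))
        (WsetP e α₀ ρ) :=
  stmt4_general e hbij hord ν hν t α₀ F hF hα₀
end

section
/- Let κ be a set, let B ⊆ κ be countable, and let α₀ ∈ κ ∖ B. Then for ν-almost every ρ ∈ Ω, the set W_{α₀}(ρ) is dense in the topology on ω^{<ω} generated by τ₀ ∪ {U_α(ρ) : α ∈ B}; equivalently, U_{α₀}(ρ) contains no nonempty open set of that topology. -/
open MeasureTheory
open scoped ENNReal

/-!
Fix a point `s` of a basic open set `⋂ [t] ∩ ⋂ [t']ᶜ ∩ ⋂_{α ∈ L} U_α` (`L ⊆ B` finite) and put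
`s' = s_{α₀, s⌢k}`. A prefix of `s'` that is not a prefix of `s` extends `s⌢k`, so for `k` outside
a finite set the only possible obstruction to `s'` lying in the basic set is some `s_{α,m} ⊆ s'`
with `s⌢k ⊆ t_m` and `m` large. That forces the `m + 2` coordinates `ρ(α, t_m, ·)` to copy
coordinates `ρ(α₀, s⌢k, ·)`, an event of probability at most `3^{-(m+2)}` because `α ≠ α₀`. By
Borel–Cantelli, almost surely this happens for only finitely many `m`, simultaneously for the
countably many `s` and `α ∈ B`.
-/

open Filter Function

lemma List.concat_prefix_of_prefix_of_not_prefix_s5 {α : Type*} {s u w : List α} {k : α}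
    (hk : s ++ [k] <+: w) (hu : u <+: w) (hus : ¬ u <+: s) : s ++ [k] <+: u := by
  rcases List.prefix_or_prefix_of_prefix hu hk with h | h
  · rcases List.prefix_concat_iff.1 h with rfl | h
    · exact List.prefix_rfl
    · exact absurd h hus
  · exact h

lemma List.finite_setOf_exists_concat_prefix {α : Type*} {O : Set (List α)} (hO : O.Finite)
    (s : List α) : {k | ∃ u ∈ O, s ++ [k] <+: u}.Finite := by
  refine ((hO.image fun u => u[s.length]?).preimage (Option.some_injective α).injOn).subset ?_
  rintro k ⟨u, hu, hku⟩
  refine ⟨u, hu, ?_⟩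
  simpa using List.prefix_iff_getElem?.1 hku s.length (by simp)

lemma Function.Injective.finite_setOf_prefix {α β : Type*} {e : β → List α} (he : Injective e)
    (s : List α) : {m | e m <+: s}.Finite :=
  ((List.finite_toSet s.inits).preimage he.injOn).subset fun _ hm => (List.mem_inits _ _).2 hm

lemma Set.Finite.exists_finite_subset_image_eq_inter {α β : Type*} {F : Set β} (hF : F.Finite)
    (f : α → β) (s : Set α) : ∃ t ⊆ s, t.Finite ∧ F ∩ f '' s = f '' t :=
  Set.exists_subset_image_finite_and.1 ⟨_, Set.inter_subset_right, hF.inter_of_left _, rfl⟩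

section GeometricProduct

variable {ι : Type*}

def IsGeometricProduct (ν : Measure (ι → ℕ)) : Prop :=
  ∀ (F : Finset ι) (g : ι → ℕ),
    ν {ρ | ∀ c ∈ F, ρ c = g c} = ∏ c ∈ F, ((2 : ℝ≥0∞)⁻¹) ^ (g c + 1)

lemma ENNReal.tsum_sq_inv_two_pow_succ : ∑' m : ℕ, ((2 : ℝ≥0∞)⁻¹ ^ (m + 1)) ^ 2 = 3⁻¹ := by
  have h4 : ∀ m : ℕ, ((2 : ℝ≥0∞)⁻¹ ^ (m + 1)) ^ 2 = 4⁻¹ ^ (m + 1) := fun m => by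
    rw [← pow_mul, mul_comm, pow_mul, ← ENNReal.inv_pow]; norm_num
  have h34 : (1 : ℝ≥0∞) - 4⁻¹ ≠ 0 := (tsub_pos_of_lt (ENNReal.inv_lt_one.2 (by norm_num))).ne'
  simp_rw [h4]
  rw [ENNReal.tsum_geometric_add_one, ← ENNReal.toReal_eq_toReal_iff'
      (ENNReal.mul_ne_top (by simp) (ENNReal.inv_ne_top.2 h34)) (by simp),
    ENNReal.toReal_mul, ENNReal.toReal_inv, ENNReal.toReal_inv, ENNReal.toReal_inv,
    ENNReal.toReal_sub_of_le (by norm_num) (by simp)]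
  norm_num

/-- Two fresh coordinates agree with probability `∑ₘ 4^{-(m+1)} = 1/3`. -/
lemma IsGeometricProduct.measure_cylinder_forall_eq_le {ν : Measure (ι → ℕ)}
    (hν : IsGeometricProduct ν) (j : ℕ) :
    ∀ (a b : ℕ → ι) (G : Finset ι) (g : ι → ℕ), Injective a → Injective b →
      (∀ i i', a i ≠ b i') → (∀ i, a i ∉ G) → (∀ i, b i ∉ G) →
      ν {ρ | (∀ c ∈ G, ρ c = g c) ∧ ∀ i < j, ρ (a i) = ρ (b i)} ≤
        (∏ c ∈ G, ((2 : ℝ≥0∞)⁻¹) ^ (g c + 1)) * 3⁻¹ ^ j := by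
  classical
  induction j with
  | zero =>
    intro a b G g _ _ _ _ _
    simpa using (hν G g).le
  | succ j ih =>
    intro a b G g ha hb hab haG hbG
    have ha₀ : a 0 ∉ insert (b 0) G := by simp [hab 0 0, haG 0]
    set g' : ℕ → ι → ℕ := fun m => update (update g (b 0) m) (a 0) m
    have hsub : {ρ : ι → ℕ | (∀ c ∈ G, ρ c = g c) ∧ ∀ i < j + 1, ρ (a i) = ρ (b i)} ⊆
        ⋃ m, {ρ | (∀ c ∈ insert (a 0) (insert (b 0) G), ρ c = g' m c) ∧
          ∀ i < j, ρ (a (i + 1)) = ρ (b (i + 1))} := by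
      rintro ρ ⟨hG, hj⟩
      refine Set.mem_iUnion.2 ⟨ρ (a 0), ?_, fun i hi => hj (i + 1) (by omega)⟩
      simp only [Finset.mem_insert, forall_eq_or_imp, g', update_self]
      refine ⟨trivial, ?_, fun c hc => ?_⟩
      · rw [update_of_ne (hab 0 0).symm, update_self, hj 0 (by omega)]
      · rw [update_of_ne (by rintro rfl; exact haG 0 hc),
          update_of_ne (by rintro rfl; exact hbG 0 hc), hG c hc]
    have hweight : ∀ m, ∏ c ∈ insert (a 0) (insert (b 0) G), ((2 : ℝ≥0∞)⁻¹) ^ (g' m c + 1) =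
        ((2 : ℝ≥0∞)⁻¹ ^ (m + 1)) ^ 2 * ∏ c ∈ G, ((2 : ℝ≥0∞)⁻¹) ^ (g c + 1) := fun m => by
      rw [Finset.prod_insert ha₀, Finset.prod_insert (hbG 0)]
      simp only [g', update_self, update_of_ne (hab 0 0).symm]
      rw [Finset.prod_congr rfl fun c hc => by
        rw [update_of_ne (by rintro rfl; exact haG 0 hc),
          update_of_ne (by rintro rfl; exact hbG 0 hc)], ← mul_assoc, sq]
    calc _ ≤ ∑' m, ν {ρ | (∀ c ∈ insert (a 0) (insert (b 0) G), ρ c = g' m c) ∧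
          ∀ i < j, ρ (a (i + 1)) = ρ (b (i + 1))} := (measure_mono hsub).trans (measure_iUnion_le _)
      _ ≤ ∑' m, ((2 : ℝ≥0∞)⁻¹ ^ (m + 1)) ^ 2 *
          ((∏ c ∈ G, ((2 : ℝ≥0∞)⁻¹) ^ (g c + 1)) * 3⁻¹ ^ j) := by
        refine ENNReal.tsum_le_tsum fun m => ?_
        refine (ih _ _ _ _ (ha.comp (add_left_injective 1)) (hb.comp (add_left_injective 1))
          (fun i i' => hab _ _) (fun i => ?_) (fun i => ?_)).trans_eq ?_
        · simp [ha.ne (Nat.succ_ne_zero i), hab, haG]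
        · simp [hb.ne (Nat.succ_ne_zero i), (hab _ _).symm, hbG]
        · rw [hweight, mul_assoc]
      _ = _ := by rw [ENNReal.tsum_mul_right, ENNReal.tsum_sq_inv_two_pow_succ, pow_succ]; ring

end GeometricProduct

section RandomSequences

variable {κ : Type*}

lemma length_sFnP (e : ℕ → List ℕ) (α : κ) (n : ℕ) (ρ : κ × List ℕ × ℕ → ℕ) :
    (sFnP e α n ρ).length = (e n).length + (n + 2) := by
  simp [sFnP]

lemma getElem?_sFnP (e : ℕ → List ℕ) (α : κ) (n : ℕ) (ρ : κ × List ℕ × ℕ → ℕ) {i : ℕ}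
    (hi : i < n + 2) : (sFnP e α n ρ)[(e n).length + i]? = some (ρ (α, e n, i)) := by
  rw [sFnP, List.getElem?_append_right (Nat.le_add_right _ _), Nat.add_sub_cancel_left,
    List.getElem?_ofFn]
  simp [hi]

lemma IsGeometricProduct.measure_sFnP_prefix_le {ν : Measure (κ × List ℕ × ℕ → ℕ)}
    (hν : IsGeometricProduct ν) {α α₀ : κ} (hα : α ≠ α₀) (e : ℕ → List ℕ) {m n : ℕ}
    (hmn : (e n).length ≤ (e m).length) :
    ν {ρ | sFnP e α m ρ <+: sFnP e α₀ n ρ} ≤ 3⁻¹ ^ (m + 2) := by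
  set a : ℕ → κ × List ℕ × ℕ := fun i => (α, e m, i)
  set b : ℕ → κ × List ℕ × ℕ := fun i => (α₀, e n, (e m).length - (e n).length + i)
  have hsub : {ρ | sFnP e α m ρ <+: sFnP e α₀ n ρ} ⊆
      {ρ | (∀ c ∈ (∅ : Finset _), ρ c = 0) ∧ ∀ i < m + 2, ρ (a i) = ρ (b i)} := by
    intro ρ hρ
    refine ⟨by simp, fun i hi => ?_⟩
    have hlen := hρ.length_le
    rw [length_sFnP, length_sFnP] at hlen
    have hcopy := List.prefix_iff_getElem?.1 hρ ((e m).length + i) (by rw [length_sFnP]; omega)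
    rw [← List.getElem?_eq_getElem, getElem?_sFnP e α m ρ hi,
      show (e m).length + i = (e n).length + ((e m).length - (e n).length + i) by omega,
      getElem?_sFnP e α₀ n ρ (by omega)] at hcopy
    exact (Option.some_injective _ hcopy).symm
  refine (measure_mono hsub).trans ?_
  simpa using hν.measure_cylinder_forall_eq_le (m + 2) a b ∅ 0
    (fun i i' h => by simpa [a] using h) (fun i i' h => by simpa [b] using h)
    (fun i i' h => hα (congrArg Prod.fst h)) (by simp) (by simp)

lemma IsGeometricProduct.ae_eventually_not_sFnP_prefix {ν : Measure (κ × List ℕ × ℕ → ℕ)}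
    (hν : IsGeometricProduct ν) {α α₀ : κ} (hα : α ≠ α₀) (e : ℕ → List ℕ) {f : ℕ → ℕ}
    (hf : ∀ m, (e (f m)).length ≤ (e m).length) :
    ∀ᵐ ρ ∂ν, ∀ᶠ m in atTop, ¬ sFnP e α m ρ <+: sFnP e α₀ (f m) ρ := by
  refine ae_eventually_notMem (ne_top_of_le_ne_top ?_
    (ENNReal.tsum_le_tsum fun m => hν.measure_sFnP_prefix_le hα e (hf m)))
  simp_rw [pow_add, ENNReal.tsum_mul_right]
  exact ENNReal.mul_ne_top (tsum_geometric_lt_top.2 (ENNReal.inv_lt_one.2 (by norm_num))).ne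
    (by simp)

end RandomSequences

section Extension

variable {κ : Type*} {e : ℕ → List ℕ} {d : List ℕ → ℕ} {α₀ : κ} {ρ : κ × List ℕ × ℕ → ℕ}

theorem exists_prefix_mem_WsetP_of_eventually (hinj : Injective e) (hd : ∀ t, e (d t) = t)
    {s : List ℕ} {T : Set (List ℕ)} (hT : T.Finite) {L : Set κ} (hL : L.Finite)
    (hsT : ∀ t ∈ T, ¬ t <+: s) (hsL : ∀ α ∈ L, s ∈ UsetP e α ρ)
    (hev : ∀ α ∈ L, ∀ᶠ m in atTop,
      ¬ sFnP e α m ρ <+: sFnP e α₀ (d ((e m).take (s.length + 1))) ρ) :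
    ∃ s', s <+: s' ∧ s' ∈ WsetP e α₀ ρ ∧ (∀ t ∈ T, ¬ t <+: s') ∧ ∀ α ∈ L, s' ∈ UsetP e α ρ := by
  obtain ⟨K, hK⟩ := eventually_atTop.1 ((eventually_all_finite hL).2 hev)
  set O := T ∪ (fun p : κ × ℕ => sFnP e p.1 p.2 ρ) '' (L ×ˢ {m | e m <+: s}) ∪ e '' Set.Iio K
  have hO : O.Finite := (hT.union ((hL.prod (hinj.finite_setOf_prefix s)).image _)).union
    ((Set.finite_Iio K).image e)
  obtain ⟨k, hkO⟩ := (List.finite_setOf_exists_concat_prefix hO s).exists_notMem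
  have hk : ∀ u ∈ O, ¬ s ++ [k] <+: u := fun u hu h => hkO ⟨u, hu, h⟩
  set s' := sFnP e α₀ (d (s ++ [k])) ρ
  have hks' : s ++ [k] <+: s' := by
    simp only [s', sFnP, hd]
    exact List.prefix_append _ _
  refine ⟨s', (List.prefix_append s [k]).trans hks', ⟨_, List.prefix_rfl⟩,
    fun t ht hts' => ?_, fun α hα => ?_⟩
  · exact hk t (Or.inl (Or.inl ht))
      (List.concat_prefix_of_prefix_of_not_prefix_s5 hks' hts' (hsT t ht))
  rintro ⟨m, hm⟩
  have hkm := List.concat_prefix_of_prefix_of_not_prefix_s5 hks' hm fun h => hsL α hα ⟨m, h⟩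
  by_cases hms : e m <+: s
  · exact hk _ (Or.inl (Or.inr ⟨(α, m), ⟨hα, hms⟩, rfl⟩)) hkm
  have hke :=
    List.concat_prefix_of_prefix_of_not_prefix_s5 hks' ((List.prefix_append _ _).trans hm) hms
  by_cases hmK : m < K
  · exact hk _ (Or.inr ⟨m, hmK, rfl⟩) hke
  have htake : (e m).take (s.length + 1) = s ++ [k] := by
    simpa using (List.prefix_iff_eq_take.1 hke).symm
  exact hK m (not_lt.1 hmK) α hα (htake ▸ hm)

theorem dense_WsetP_of_eventually (hinj : Injective e) (hd : ∀ t, e (d t) = t) {B : Set κ}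
    (hev : ∀ ℓ, ∀ α ∈ B, ∀ᶠ m in atTop,
      ¬ sFnP e α m ρ <+: sFnP e α₀ (d ((e m).take ℓ)) ρ) :
    @Dense _ (TopologicalSpace.generateFrom (subbasis0 ∪ (fun α => UsetP e α ρ) '' B))
      (WsetP e α₀ ρ) := by
  let _ := TopologicalSpace.generateFrom (subbasis0 ∪ (fun α => UsetP e α ρ) '' B)
  refine (TopologicalSpace.isTopologicalBasis_of_subbasis rfl).dense_iff.2 ?_
  rintro _ ⟨F, ⟨hF, hFsub⟩, rfl⟩ ⟨x, hx⟩
  rw [Set.mem_sInter] at hx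
  obtain ⟨T, -, hT, hTF⟩ := hF.exists_finite_subset_image_eq_inter (fun t => (cone t)ᶜ) Set.univ
  obtain ⟨L, hLB, hL, hLF⟩ := hF.exists_finite_subset_image_eq_inter (fun α => UsetP e α ρ) B
  have hTmem : ∀ t ∈ T, (cone t)ᶜ ∈ F := fun t ht => (hTF.symm.subset ⟨t, ht, rfl⟩).1
  have hLmem : ∀ α ∈ L, UsetP e α ρ ∈ F := fun α hα => (hLF.symm.subset ⟨α, hα, rfl⟩).1
  obtain ⟨s', hxs', hs'W, hs'T, hs'L⟩ := exists_prefix_mem_WsetP_of_eventually hinj hd hT hL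
    (fun t ht => hx _ (hTmem t ht)) (fun α hα => hx _ (hLmem α hα))
    (fun α hα => hev _ α (hLB hα))
  refine ⟨s', Set.mem_sInter.2 fun A hA => ?_, hs'W⟩
  rcases hFsub hA with (⟨t, rfl⟩ | ⟨t, rfl⟩) | ⟨α, hαB, rfl⟩
  · exact (hx _ hA).trans hxs'
  · obtain ⟨t', ht', heq⟩ := hTF.subset ⟨hA, t, trivial, rfl⟩
    exact heq ▸ hs'T t' ht'
  · obtain ⟨β, hβ, heq⟩ := hLF.subset ⟨hA, α, hαB, rfl⟩
    exact heq ▸ hs'L β hβ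

end Extension

theorem stmt5_general {κ : Type*}
    (e : ℕ → List ℕ) (hbij : Function.Bijective e)
    (ν : Measure (κ × List ℕ × ℕ → ℕ))
    (hν : ∀ (F : Finset (κ × List ℕ × ℕ)) (g : κ × List ℕ × ℕ → ℕ),
      ν {ρ | ∀ c ∈ F, ρ c = g c} = ∏ c ∈ F, ((2 : ℝ≥0∞)⁻¹) ^ (g c + 1))
    (B : Set κ) (hB : B.Countable) (α₀ : κ) (hα₀ : α₀ ∉ B) :
    ∀ᵐ ρ ∂ν,
      @Dense _
        (TopologicalSpace.generateFrom (subbasis0 ∪ ((fun α => UsetP e α ρ) '' B)))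
        (WsetP e α₀ ρ) := by
  obtain ⟨d, hd⟩ := hbij.2.hasRightInverse
  have hev : ∀ᵐ ρ ∂ν, ∀ ℓ, ∀ α ∈ B, ∀ᶠ m in atTop,
      ¬ sFnP e α m ρ <+: sFnP e α₀ (d ((e m).take ℓ)) ρ :=
    ae_all_iff.2 fun ℓ => (ae_ball_iff hB).2 fun α hα =>
      IsGeometricProduct.ae_eventually_not_sFnP_prefix hν (ne_of_mem_of_not_mem hα hα₀) e
        fun m => (hd _).symm ▸ List.length_take_le' _ _
  filter_upwards [hev] with ρ hρ using dense_WsetP_of_eventually hbij.1 hd hρ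

theorem stmt5 {κ : Type*}
    (e : ℕ → List ℕ) (hbij : Function.Bijective e)
    (hord : ∀ n ℓ, e n <+: e ℓ → e n ≠ e ℓ → n < ℓ)
    (hsuc : ∀ n ℓ t k, e n = t ++ [k] → e ℓ = t ++ [k + 1] → n < ℓ)
    (ν : Measure (κ × List ℕ × ℕ → ℕ)) [IsProbabilityMeasure ν]
    (hν : ∀ (F : Finset (κ × List ℕ × ℕ)) (g : κ × List ℕ × ℕ → ℕ),
      ν {ρ | ∀ c ∈ F, ρ c = g c} = ∏ c ∈ F, ((2 : ℝ≥0∞)⁻¹) ^ (g c + 1))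
    (B : Set κ) (hB : B.Countable) (α₀ : κ) (hα₀ : α₀ ∉ B) :
    ∀ᵐ ρ ∂ν,
      @Dense _
        (TopologicalSpace.generateFrom (subbasis0 ∪ ((fun α => UsetP e α ρ) '' B)))
        (WsetP e α₀ ρ) :=
  stmt5_general e hbij ν hν B hB α₀ hα₀
end

section
/- Let κ be a set. For every ρ ∈ Ω, every α ∈ κ, and every t ∈ ω^{<ω}: each point s_{α,t⌢ℓ}(ρ) (ℓ ∈ ω) belongs to W_α(ρ) and properly end-extends t, and the sequence (s_{α,t⌢ℓ}(ρ))_{ℓ∈ω} converges to t in the topology τ₀. Consequently, for every ρ and α, W_α(ρ) is a τ₀-open τ₀-dense subset of ω^{<ω}, and U_α(ρ) has empty τ₀-interior. -/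
theorem stmt6 {κ : Type*}
    (e : ℕ → List ℕ) (hbij : Function.Bijective e)
    (hord : ∀ n ℓ, e n <+: e ℓ → e n ≠ e ℓ → n < ℓ)
    (hsuc : ∀ n ℓ t k, e n = t ++ [k] → e ℓ = t ++ [k + 1] → n < ℓ)
    (ρ : κ × List ℕ × ℕ → ℕ) (α : κ) :
    (∀ (t : List ℕ) (ℓ n : ℕ), e n = t ++ [ℓ] →
        sFnP e α n ρ ∈ WsetP e α ρ ∧ t <+: sFnP e α n ρ ∧ t ≠ sFnP e α n ρ) ∧
    (∀ (t : List ℕ) (idx : ℕ → ℕ), (∀ ℓ, e (idx ℓ) = t ++ [ℓ]) →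
        Filter.Tendsto (fun ℓ => sFnP e α (idx ℓ) ρ) Filter.atTop (@nhds _ tau0 t)) ∧
    @IsOpen _ tau0 (WsetP e α ρ) ∧
    @Dense _ tau0 (WsetP e α ρ) ∧
    @interior _ tau0 (UsetP e α ρ) = ∅ := by
  letI : TopologicalSpace (List ℕ) := tau0
  -- part 1
  have part1 : ∀ (t : List ℕ) (ℓ n : ℕ), e n = t ++ [ℓ] →
      sFnP e α n ρ ∈ WsetP e α ρ ∧ t <+: sFnP e α n ρ ∧ t ≠ sFnP e α n ρ := by
    intro t ℓ n hn
    refine ⟨⟨n, List.prefix_rfl⟩, ?_, ?_⟩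
    · unfold sFnP
      rw [hn]
      exact ((List.prefix_append t [ℓ]).trans (List.prefix_append _ _))
    · intro h
      have := congrArg List.length h
      simp [sFnP, hn] at this
  -- part 2
  have part2 : ∀ (t : List ℕ) (idx : ℕ → ℕ), (∀ ℓ, e (idx ℓ) = t ++ [ℓ]) →
      Filter.Tendsto (fun ℓ => sFnP e α (idx ℓ) ρ) Filter.atTop (nhds t) := by
    intro t idx hidx
    rw [show (nhds t) = @nhds _ tau0 t from rfl, tau0,
      TopologicalSpace.tendsto_nhds_generateFrom_iff]
    rintro s (⟨u, rfl⟩ | ⟨u, rfl⟩) hts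
    · -- cone u: all values are in it since u <+: t <+: sFnP
      refine Filter.Eventually.mono (Filter.eventually_atTop.2 ⟨0, fun ℓ _ => trivial⟩) ?_
      intro ℓ _
      have h1 : t ++ [ℓ] <+: sFnP e α (idx ℓ) ρ := by
        unfold sFnP; rw [hidx ℓ]; exact List.prefix_append _ _
      exact hts.trans ((List.prefix_append t [ℓ]).trans h1)
    · -- complement of cone u
      have hts' : ¬ u <+: t := hts
      have key : ∀ ℓ, u <+: sFnP e α (idx ℓ) ρ → t ++ [ℓ] <+: u := by
        intro ℓ hu
        have h1 : t ++ [ℓ] <+: sFnP e α (idx ℓ) ρ := by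
          unfold sFnP; rw [hidx ℓ]; exact List.prefix_append _ _
        rcases le_or_gt u.length t.length with hlen | hlen
        · exact (hts' (List.prefix_of_prefix_length_le hu
            ((List.prefix_append t [ℓ]).trans h1) hlen)).elim
        · have : (t ++ [ℓ]).length ≤ u.length := by simp; omega
          exact List.prefix_of_prefix_length_le h1 hu this
      show ∀ᶠ ℓ in Filter.atTop, sFnP e α (idx ℓ) ρ ∈ (cone u)ᶜ
      rw [Filter.eventually_atTop]
      by_cases hex : ∃ ℓ₀, t ++ [ℓ₀] <+: u
      · obtain ⟨ℓ₀, hℓ₀⟩ := hex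
        refine ⟨ℓ₀ + 1, fun ℓ hℓ hu => ?_⟩
        have h2 := key ℓ hu
        have : t ++ [ℓ] = t ++ [ℓ₀] := by
          have hl : (t ++ [ℓ]).length = (t ++ [ℓ₀]).length := by simp
          exact List.prefix_of_prefix_length_le h2 hℓ₀ hl.le |>.eq_of_length hl
        have : ℓ = ℓ₀ := by simpa using this
        omega
      · exact ⟨0, fun ℓ _ hu => hex ⟨ℓ, key ℓ hu⟩⟩
  refine ⟨part1, part2, ?_, ?_, ?_⟩
  · -- open
    have : WsetP e α ρ = ⋃ n, cone (sFnP e α n ρ) := by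
      ext s; simp [WsetP, cone]
    rw [this]
    exact isOpen_iUnion fun n =>
      TopologicalSpace.isOpen_generateFrom_of_mem (Or.inl ⟨_, rfl⟩)
  · -- dense
    intro t
    set idx : ℕ → ℕ := fun ℓ => Function.surjInv hbij.surjective (t ++ [ℓ]) with hidxdef
    have hidx : ∀ ℓ, e (idx ℓ) = t ++ [ℓ] := fun ℓ =>
      Function.surjInv_eq hbij.surjective _
    exact mem_closure_of_tendsto (part2 t idx hidx)
      (Filter.Eventually.of_forall fun ℓ => (part1 t ℓ (idx ℓ) (hidx ℓ)).1)
  · -- interior of complement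
    have hd : Dense (WsetP e α ρ) := by
      intro t
      set idx : ℕ → ℕ := fun ℓ => Function.surjInv hbij.surjective (t ++ [ℓ]) with hidxdef
      have hidx : ∀ ℓ, e (idx ℓ) = t ++ [ℓ] := fun ℓ =>
        Function.surjInv_eq hbij.surjective _
      exact mem_closure_of_tendsto (part2 t idx hidx)
        (Filter.Eventually.of_forall fun ℓ => (part1 t ℓ (idx ℓ) (hidx ℓ)).1)
    rw [UsetP, interior_compl, hd.closure_eq, Set.compl_univ]
end

section
/- Let t ∈ ω^{<ω} and let (s_ℓ)_{ℓ∈ω} be a sequence in ω^{<ω} such that t⌢ℓ ⊆ s_ℓ for every ℓ ∈ ω. Then the sequence (s_ℓ) converges to t in the topology τ₀. -/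
theorem List.getElem?_length_eq_of_prefix_of_not_prefix {α : Type*} {t u s : List α} {a : α}
    (hta : t ++ [a] <+: s) (hus : u <+: s) (hut : ¬u <+: t) : u[t.length]? = some a := by
  have hlen : t.length < u.length := by
    by_contra! hle
    exact hut (List.prefix_of_prefix_length_le hus ((List.prefix_append t [a]).trans hta) hle)
  have hsu : s[t.length]? = some u[t.length] := List.prefix_iff_getElem?.1 hus _ hlen
  have hst : s[t.length]? = some a := by
    simpa using List.prefix_iff_getElem?.1 hta t.length (by simp)
  rw [List.getElem?_eq_getElem hlen]
  exact hsu.symm.trans hst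

theorem subsingleton_setOf_mem_cone {t u : List ℕ} {s : ℕ → List ℕ}
    (hs : ∀ ℓ, t ++ [ℓ] <+: s ℓ) (htu : t ∉ cone u) : {ℓ | s ℓ ∈ cone u}.Subsingleton :=
  fun _ hℓ _ hm => Option.some_injective _ <|
    (List.getElem?_length_eq_of_prefix_of_not_prefix (hs _) hℓ htu).symm.trans
      (List.getElem?_length_eq_of_prefix_of_not_prefix (hs _) hm htu)

theorem stmt7 (t : List ℕ) (s : ℕ → List ℕ) (hs : ∀ ℓ : ℕ, t ++ [ℓ] <+: s ℓ) :
    Filter.Tendsto s Filter.atTop (@nhds _ tau0 t) := by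
  rw [tau0, TopologicalSpace.tendsto_nhds_generateFrom_iff]
  rintro _ (⟨u, rfl⟩ | ⟨u, rfl⟩) htu
  · exact Filter.Eventually.of_forall fun ℓ => htu.trans ((List.prefix_append t [ℓ]).trans (hs ℓ))
  · rw [← Nat.cofinite_eq_atTop]
    exact Filter.eventually_cofinite.2 <| by
      simpa only [Set.mem_compl_iff, not_not] using (subsingleton_setOf_mem_cone hs htu).finite
end

section
/- Every nonempty τ₀-open subset of ω^{<ω} contains a cone [t'] for some t' ∈ ω^{<ω}. -/
/-
A basic `τ₀`-open set around `s` is a finite intersection of cones `[t]` with `t ⊆ s` and of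
complements of cones `[t]` with `t ⊈ s`. Every such excluded `t` that is compatible with a
one-step extension `s ++ [n]` must have `n` at position `|s|`, so choosing `n` outside the
finitely many values `t(|s|)` makes `[s ++ [n]]` lie inside the basic set.
-/

theorem List.getElem?_length_eq_of_not_prefix {α : Type*} {s t x : List α} {a : α}
    (hts : ¬t <+: s) (htx : t <+: x) (hsx : s ++ [a] <+: x) : t[s.length]? = some a := by
  have hlen : s.length < t.length := by
    by_contra! hle
    exact hts (prefix_of_prefix_length_le htx ((s.prefix_append [a]).trans hsx) hle)
  calc t[s.length]? = x[s.length]? := by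
        rw [prefix_iff_getElem?.mp htx s.length hlen, getElem?_eq_getElem hlen]
    _ = some a := by simpa using prefix_iff_getElem?.mp hsx s.length (by simp)

theorem cone_injective : Function.Injective cone := fun a b h =>
  antisymm (r := (· <+: ·)) (h ▸ List.prefix_rfl : b ∈ cone a) (h ▸ List.prefix_rfl : a ∈ cone b)

theorem cone_subset_cone {s t : List ℕ} (h : t <+: s) : cone s ⊆ cone t :=
  fun _ hx => h.trans hx

theorem exists_cone_append_subset_compl (s : List ℕ) {T : Set (List ℕ)} (hT : T.Finite) :
    ∃ n, ∀ t ∈ T, ¬t <+: s → cone (s ++ [n]) ⊆ (cone t)ᶜ := by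
  obtain ⟨n, hn⟩ := (hT.image fun t => t.getD s.length 0).exists_notMem
  refine ⟨n, fun t ht hts x hx htx => hn ⟨t, ht, ?_⟩⟩
  simp [List.getD_eq_getElem?_getD, List.getElem?_length_eq_of_not_prefix hts htx hx]

theorem exists_cone_subset_sInter {S : Set (Set (List ℕ))} (hS : S.Finite) (hSsub : S ⊆ subbasis0)
    {s : List ℕ} (hs : s ∈ ⋂₀ S) : ∃ t, cone t ⊆ ⋂₀ S := by
  have hT : {t | (cone t)ᶜ ∈ S}.Finite :=
    hS.preimage (compl_injective.comp cone_injective).injOn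
  obtain ⟨n, hn⟩ := exists_cone_append_subset_compl s hT
  refine ⟨s ++ [n], Set.subset_sInter fun C hC => ?_⟩
  rcases hSsub hC with ⟨t, rfl⟩ | ⟨t, rfl⟩
  · exact cone_subset_cone ((hs _ hC).trans (s.prefix_append [n]))
  · exact hn t hC (hs _ hC)

theorem stmt8 (U : Set (List ℕ)) (hU : @IsOpen _ tau0 U) (hne : U.Nonempty) :
    ∃ t : List ℕ, cone t ⊆ U := by
  let := tau0
  obtain ⟨s, hs⟩ := hne
  obtain ⟨_, ⟨S, ⟨hS, hSsub⟩, rfl⟩, hsS, hSU⟩ :=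
    (TopologicalSpace.isTopologicalBasis_of_subbasis rfl).exists_subset_of_mem_open hs hU
  obtain ⟨t, ht⟩ := exists_cone_subset_sInter hS hSsub hsS
  exact ⟨t, ht.trans hSU⟩
end

section
/- Let (T_n)_{n∈ω} be a sequence of Miller trees such that for every n: T_{n+1} ⊆ T_n and Br_k(T_{n+1}) = Br_k(T_n) for all k ≤ n. Then T_ω = ⋂_{n∈ω} T_n is a Miller tree, and Br_k(T_ω) = Br_k(T_k) for every k ∈ ω. -/
/-- `b` is a branching node of `T`: it lies in `T` and has at least two immediate
successors in `T`. -/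
def IsBranchNode (T : Set (List ℕ)) (b : List ℕ) : Prop :=
  b ∈ T ∧ ∃ k₁ k₂ : ℕ, k₁ ≠ k₂ ∧ b ++ [k₁] ∈ T ∧ b ++ [k₂] ∈ T

/-- `T` is a Miller tree: a nonempty set of finite sequences of naturals, closed under
initial segments, in which every element end-extends to a branching node and every
branching node has infinitely many immediate successors. -/
def IsMillerTree (T : Set (List ℕ)) : Prop :=
  T.Nonempty ∧
  (∀ s ∈ T, ∀ u : List ℕ, u <+: s → u ∈ T) ∧
  (∀ s ∈ T, ∃ b : List ℕ, s <+: b ∧ IsBranchNode T b) ∧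
  (∀ b : List ℕ, IsBranchNode T b → {k : ℕ | b ++ [k] ∈ T}.Infinite)

/-- `Br n T`: the branching nodes of `T` having exactly `n` proper initial segments that
are branching nodes of `T`. -/
def Br (n : ℕ) (T : Set (List ℕ)) : Set (List ℕ) :=
  {b | IsBranchNode T b ∧ {u : List ℕ | u <+: b ∧ u ≠ b ∧ IsBranchNode T u}.ncard = n}

/-- `subtreeAt T t = T_t = {s ∈ T : s ⊆ t or t ⊆ s}`. -/
def subtreeAt (T : Set (List ℕ)) (t : List ℕ) : Set (List ℕ) :=
  {s ∈ T | s <+: t ∨ t <+: s}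

namespace Aux

/-- proper branching prefixes -/
def PB (T : Set (List ℕ)) (b : List ℕ) : Set (List ℕ) :=
  {u : List ℕ | u <+: b ∧ u ≠ b ∧ IsBranchNode T u}

lemma mem_Br_iff {n : ℕ} {T : Set (List ℕ)} {b : List ℕ} :
    b ∈ Br n T ↔ IsBranchNode T b ∧ (PB T b).ncard = n := Iff.rfl

lemma prefix_finite (b : List ℕ) : {u : List ℕ | u <+: b}.Finite := by
  have : {u : List ℕ | u <+: b} ⊆ (fun n => b.take n) '' Set.Iic b.length := by
    intro u hu
    exact ⟨u.length, hu.length_le, (List.prefix_iff_eq_take.mp hu).symm⟩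
  exact ((Set.finite_Iic _).image _).subset this

lemma prefix_ncard (b : List ℕ) : {u : List ℕ | u <+: b}.ncard ≤ b.length + 1 := by
  have h : {u : List ℕ | u <+: b} ⊆ (fun n => b.take n) '' Set.Iic b.length := by
    intro u hu
    exact ⟨u.length, hu.length_le, (List.prefix_iff_eq_take.mp hu).symm⟩
  calc {u : List ℕ | u <+: b}.ncard ≤ ((fun n => b.take n) '' Set.Iic b.length).ncard :=
        Set.ncard_le_ncard h ((Set.finite_Iic _).image _)
    _ ≤ (Set.Iic b.length).ncard := Set.ncard_image_le (Set.finite_Iic _)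
    _ = b.length + 1 := by
        have : (Set.Iic b.length) = ↑(Finset.Iic b.length) := by simp
        rw [this, Set.ncard_coe_finset]; simp

lemma PB_finite (T : Set (List ℕ)) (b : List ℕ) : (PB T b).Finite :=
  (prefix_finite b).subset fun _ hu => hu.1

lemma branch_mono {S T : Set (List ℕ)} (h : S ⊆ T) {b : List ℕ} :
    IsBranchNode S b → IsBranchNode T b := by
  rintro ⟨hb, k₁, k₂, hne, h1, h2⟩
  exact ⟨h hb, k₁, k₂, hne, h h1, h h2⟩

lemma PB_mono {S T : Set (List ℕ)} (h : S ⊆ T) (b : List ℕ) : PB S b ⊆ PB T b :=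
  fun _ hu => ⟨hu.1, hu.2.1, branch_mono h hu.2.2⟩

lemma prefix_concat {u b : List ℕ} {x : ℕ} (h : u <+: b ++ [x]) (hne : u ≠ b ++ [x]) :
    u <+: b := by
  have hlt : u.length < b.length + 1 := by
    have := h.length_le
    simp only [List.length_append, List.length_singleton] at this
    rcases this.lt_or_eq with h' | h'
    · exact h'
    · exact absurd (h.eq_of_length (by simpa using h')) hne
  have := List.prefix_iff_eq_take.mp h
  rw [List.take_append_of_le_length (by omega)] at this
  exact this ▸ List.take_prefix _ _

lemma exists_min_branch {T : Set (List ℕ)} (hT : IsMillerTree T) {s : List ℕ} (hs : s ∈ T) :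
    ∃ c, s <+: c ∧ IsBranchNode T c ∧
      ∀ u, s <+: u → u <+: c → u ≠ c → ¬ IsBranchNode T u := by
  classical
  obtain ⟨b, hsb, hb⟩ := hT.2.2.1 s hs
  have hex : ∃ n, ∃ c : List ℕ, c.length = n ∧ s <+: c ∧ IsBranchNode T c :=
    ⟨b.length, b, rfl, hsb, hb⟩
  obtain ⟨c, hclen, hsc, hc⟩ := Nat.find_spec hex
  refine ⟨c, hsc, hc, fun u hsu huc hne hu => ?_⟩
  have hlt : u.length < c.length := by
    rcases huc.length_le.lt_or_eq with h' | h'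
    · exact h'
    · exact absurd (huc.eq_of_length h') hne
  exact Nat.find_min hex (hclen ▸ hlt) ⟨u, rfl, hsu, hu⟩

section Seq
variable {T : ℕ → Set (List ℕ)}

lemma Tmono (hsub : ∀ n, T (n + 1) ⊆ T n) : ∀ {m n : ℕ}, m ≤ n → T n ⊆ T m :=
  fun {m n} h => antitone_nat_of_succ_le (f := fun n => T n) hsub h

lemma Br_stable (hbr : ∀ n k, k ≤ n → Br k (T (n + 1)) = Br k (T n)) :
    ∀ {k n : ℕ}, k ≤ n → Br k (T n) = Br k (T k) := by
  intro k n hk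
  induction n with
  | zero =>
    have : k = 0 := by omega
    subst this; rfl
  | succ n ih =>
    rcases Nat.lt_or_ge k (n + 1) with h | h
    · exact (hbr n k (by omega)).trans (ih (by omega))
    · have : k = n + 1 := by omega
      subst this; rfl

end Seq
end Aux

namespace Main
open Aux

variable {T : ℕ → Set (List ℕ)}
  (hT : ∀ n, IsMillerTree (T n))
  (hsub : ∀ n, T (n + 1) ⊆ T n)
  (hbr : ∀ n k, k ≤ n → Br k (T (n + 1)) = Br k (T n))

lemma prefix_antisymm {u v : List ℕ} (h1 : u <+: v) (h2 : v <+: u) : u = v :=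
  h1.eq_of_length (le_antisymm h1.length_le h2.length_le)

include hT hsub hbr

/-- C1: successors at level k+1 persist to all levels. -/
lemma succ_persist {k : ℕ} {b : List ℕ}
    (hb : ∀ n, k ≤ n → b ∈ Br k (T n)) {x : ℕ} (hx : b ++ [x] ∈ T (k + 1)) :
    ∀ m, b ++ [x] ∈ T m := by
  have key : ∀ j, b ++ [x] ∈ T (k + 1 + j) := by
    intro j
    induction j with
    | zero => exact hx
    | succ j ih =>
      set n := k + 1 + j with hn
      obtain ⟨c, hsc, hc, hmin⟩ := exists_min_branch (hT n) ih
      have hbBr : b ∈ Br k (T n) := hb n (by omega)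
      have hbcard : (PB (T n) b).ncard = k := hbBr.2
      have hbc : b <+: c := (List.prefix_append b [x]).trans hsc
      have hbnec : b ≠ c := by
        intro h
        have := hsc.length_le
        rw [← h] at this; simp at this
      have hPB : PB (T n) c = insert b (PB (T n) b) := by
        ext u
        constructor
        · rintro ⟨huc, hune, hubr⟩
          rcases List.prefix_or_prefix_of_prefix huc hsc with h | h
          · by_cases hux : u = b ++ [x]
            · exact absurd hubr (hmin u (by rw [hux]) huc hune)
            · have hub : u <+: b := prefix_concat h hux
              by_cases hub' : u = b
              · exact Or.inl hub'
              · exact Or.inr ⟨hub, hub', hubr⟩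
          · exact absurd hubr (hmin u h huc hune)
        · rintro (rfl | ⟨hub, hune, hubr⟩)
          · exact ⟨hbc, hbnec, hbBr.1⟩
          · refine ⟨hub.trans hbc, ?_, hubr⟩
            intro h
            subst h
            have h1 := hub.length_le
            have h2 := hsc.length_le
            simp at h2; omega
      have hcBr : c ∈ Br (k + 1) (T n) := by
        refine ⟨hc, ?_⟩
        show (PB (T n) c).ncard = k + 1
        rw [hPB, Set.ncard_insert_of_notMem (fun h => h.2.1 rfl) (PB_finite _ _), hbcard]
      have hc' : c ∈ Br (k + 1) (T (n + 1)) := by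
        rw [hbr n (k + 1) (by omega)]; exact hcBr
      exact (hT (n + 1)).2.1 c hc'.1.1 (b ++ [x]) hsc
  intro m
  rcases le_or_gt m (k + 1) with h | h
  · exact Tmono hsub h hx
  · have : m = k + 1 + (m - k - 1) := by omega
    rw [this]; exact key _

/-- C3: a stably branching node lies in the intersection, has the same successors
there as in `T (k+1)`, and branches in the intersection. -/
lemma stable_props {k : ℕ} {b : List ℕ}
    (hb : ∀ n, k ≤ n → b ∈ Br k (T n)) :
    b ∈ (⋂ n, T n) ∧ {x : ℕ | b ++ [x] ∈ ⋂ n, T n} = {x : ℕ | b ++ [x] ∈ T (k + 1)} ∧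
      IsBranchNode (⋂ n, T n) b := by
  have hmem : b ∈ ⋂ n, T n := by
    refine Set.mem_iInter.mpr fun n => ?_
    rcases le_or_gt k n with h | h
    · exact (hb n h).1.1
    · exact Tmono hsub h.le (hb k le_rfl).1.1
  have hsucc : {x : ℕ | b ++ [x] ∈ ⋂ n, T n} = {x : ℕ | b ++ [x] ∈ T (k + 1)} := by
    ext x
    constructor
    · intro hx; exact Set.mem_iInter.mp hx (k + 1)
    · intro hx; exact Set.mem_iInter.mpr (succ_persist hT hsub hbr hb hx)
  have hinf : {x : ℕ | b ++ [x] ∈ ⋂ n, T n}.Infinite := by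
    rw [hsucc]
    exact (hT (k + 1)).2.2.2 b (hb (k + 1) (by omega)).1
  obtain ⟨x, hx, y, hy, hxy⟩ := hinf.nontrivial
  exact ⟨hmem, hsucc, hmem, x, y, hxy, hx, hy⟩

omit hT hbr in
/-- L5: the set of proper branching prefixes is the same at every level `≥ k`. -/
lemma PB_level_eq {k : ℕ} {b : List ℕ}
    (hb : ∀ n, k ≤ n → b ∈ Br k (T n)) {m : ℕ} (hm : k ≤ m) :
    PB (T m) b = PB (T k) b := by
  refine Set.eq_of_subset_of_ncard_le (PB_mono (Tmono hsub hm) b) ?_ (PB_finite _ _)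
  have e1 : (PB (T k) b).ncard = k := (hb k le_rfl).2
  have e2 : (PB (T m) b).ncard = k := (hb m hm).2
  omega

omit hT in
/-- Core: every proper branching prefix of a stably branching node is itself stably
branching (for its own count). -/
lemma stable_of_mem_PB {k : ℕ} {b u : List ℕ}
    (hb : ∀ n, k ≤ n → b ∈ Br k (T n)) (hu : u ∈ PB (T k) b) :
    ∃ j, ∀ n, j ≤ n → u ∈ Br j (T n) := by
  have hPBu : ∀ m, k ≤ m → PB (T m) u = PB (T k) u := by
    intro m hm
    refine Set.Subset.antisymm (PB_mono (Tmono hsub hm) u) ?_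
    rintro v ⟨hvu, hvne, hvbr⟩
    have hvb : v ∈ PB (T k) b := by
      refine ⟨hvu.trans hu.1, ?_, hvbr⟩
      intro h; subst h
      exact hu.2.1 (prefix_antisymm hu.1 hvu)
    rw [← PB_level_eq hsub hb hm] at hvb
    exact ⟨hvu, hvne, hvb.2.2⟩
  have hubr : ∀ m, k ≤ m → IsBranchNode (T m) u := by
    intro m hm
    have h2 : u ∈ PB (T m) b := by rw [PB_level_eq hsub hb hm]; exact hu
    exact h2.2.2
  refine ⟨(PB (T k) u).ncard, fun n hn => ?_⟩
  have h1 : u ∈ Br (PB (T k) u).ncard (T (max n k)) := by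
    refine ⟨hubr _ (le_max_right _ _), ?_⟩
    show (PB (T (max n k)) u).ncard = (PB (T k) u).ncard
    rw [hPBu _ (le_max_right _ _)]
  rw [Br_stable hbr (le_max_of_le_left hn)] at h1
  rw [Br_stable hbr hn]
  exact h1

/-- A stably branching node is in `Br k` of the intersection. -/
lemma mem_Br_inter {k : ℕ} {b : List ℕ}
    (hb : ∀ n, k ≤ n → b ∈ Br k (T n)) :
    b ∈ Br k (⋂ n, T n) := by
  obtain ⟨hmem, hsucc, hbranch⟩ := stable_props hT hsub hbr hb
  refine ⟨hbranch, ?_⟩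
  have hPB : PB (⋂ n, T n) b = PB (T k) b := by
    refine Set.Subset.antisymm (PB_mono (Set.iInter_subset _ k) b) ?_
    rintro u hu
    obtain ⟨j, hj⟩ := stable_of_mem_PB hsub hbr hb hu
    obtain ⟨humem, -, hubr⟩ := stable_props hT hsub hbr hj
    exact ⟨hu.1, hu.2.1, hubr⟩
  show (PB (⋂ n, T n) b).ncard = k
  rw [hPB]
  exact (hb k le_rfl).2

omit hT hsub in
/-- upgrade: membership in `Br k (T n)` for all large `n` gives it for all `n ≥ k`. -/
lemma stable_upgrade {k N : ℕ} {b : List ℕ}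
    (h : ∀ n, N ≤ n → b ∈ Br k (T n)) :
    ∀ n, k ≤ n → b ∈ Br k (T n) := by
  intro n hn
  have h1 : b ∈ Br k (T (max n (max N k))) := h _ (le_trans (le_max_left _ _) (le_max_right _ _))
  rw [Br_stable hbr (le_max_of_le_left hn)] at h1
  rw [Br_stable hbr hn]
  exact h1

omit hT in
/-- C4: every branching node of the intersection is stably branching. -/
lemma branch_stabilizes {b : List ℕ} (hbranch : IsBranchNode (⋂ n, T n) b) :
    ∃ k, ∀ n, k ≤ n → b ∈ Br k (T n) := by
  classical
  set f : ℕ → ℕ := fun n => (PB (T n) b).ncard with hf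
  have hanti : Antitone f :=
    antitone_nat_of_succ_le fun n => Set.ncard_le_ncard (PB_mono (hsub n) b) (PB_finite _ _)
  have hne : (Set.range f).Nonempty := ⟨f 0, 0, rfl⟩
  obtain ⟨N, hN⟩ : ∃ N, f N = sInf (Set.range f) := Nat.sInf_mem hne
  have hconst : ∀ n, N ≤ n → f n = f N := by
    intro n hn
    refine le_antisymm (hanti hn) ?_
    rw [hN]
    exact Nat.sInf_le ⟨n, rfl⟩
  refine ⟨f N, stable_upgrade hbr (N := N) fun n hn => ?_⟩
  exact ⟨branch_mono (Set.iInter_subset _ n) hbranch, hconst n hn⟩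

end Main

theorem stmt10_aux (T : ℕ → Set (List ℕ))
    (hT : ∀ n, IsMillerTree (T n))
    (hsub : ∀ n, T (n + 1) ⊆ T n)
    (hbr : ∀ n k, k ≤ n → Br k (T (n + 1)) = Br k (T n)) :
    IsMillerTree (⋂ n, T n) ∧ ∀ k, Br k (⋂ n, T n) = Br k (T k) := by
  constructor
  · refine ⟨?_, ?_, ?_, ?_⟩
    · refine ⟨[], Set.mem_iInter.mpr fun n => ?_⟩
      obtain ⟨s, hs⟩ := (hT n).1
      exact (hT n).2.1 s hs [] List.nil_prefix
    · intro s hs u hu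
      exact Set.mem_iInter.mpr fun n => (hT n).2.1 s (Set.mem_iInter.mp hs n) u hu
    · intro s hs
      set n := s.length + 1 with hn
      obtain ⟨c, hsc, hc, hmin⟩ := Aux.exists_min_branch (hT n) (Set.mem_iInter.mp hs n)
      set j := (Aux.PB (T n) c).ncard with hj
      have hsubpre : Aux.PB (T n) c ⊆ {u : List ℕ | u <+: s} := by
        rintro u ⟨huc, hune, hubr⟩
        rcases List.prefix_or_prefix_of_prefix huc hsc with h | h
        · exact h
        · exact absurd hubr (hmin u h huc hune)
      have hjn : j ≤ n := by
        have h1 := Set.ncard_le_ncard hsubpre (Aux.prefix_finite s)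
        have h2 := Aux.prefix_ncard s
        omega
      have hcBr : c ∈ Br j (T n) := ⟨hc, rfl⟩
      have hstable : ∀ m, j ≤ m → c ∈ Br j (T m) := by
        intro m hm
        rw [Aux.Br_stable hbr hm, ← Aux.Br_stable hbr hjn]
        exact hcBr
      exact ⟨c, hsc, (Main.stable_props hT hsub hbr hstable).2.2⟩
    · intro b hbranch
      obtain ⟨k, hb⟩ := Main.branch_stabilizes hsub hbr hbranch
      have hs := (Main.stable_props hT hsub hbr hb).2.1
      rw [hs]
      exact (hT (k + 1)).2.2.2 b (hb (k + 1) (by omega)).1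
  · intro k
    ext b
    constructor
    · intro hbk
      obtain ⟨k', hb'⟩ := Main.branch_stabilizes hsub hbr hbk.1
      have h2 : b ∈ Br k' (⋂ n, T n) := Main.mem_Br_inter hT hsub hbr hb'
      have e1 : (Aux.PB (⋂ n, T n) b).ncard = k := hbk.2
      have e2 : (Aux.PB (⋂ n, T n) b).ncard = k' := h2.2
      have : k' = k := by omega
      rw [this] at hb'
      exact hb' k le_rfl
    · intro hbk
      have hb : ∀ n, k ≤ n → b ∈ Br k (T n) := fun n hn => by
        rw [Aux.Br_stable hbr hn]; exact hbk
      exact Main.mem_Br_inter hT hsub hbr hb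

theorem stmt10 (T : ℕ → Set (List ℕ))
    (hT : ∀ n, IsMillerTree (T n))
    (hsub : ∀ n, T (n + 1) ⊆ T n)
    (hbr : ∀ n k, k ≤ n → Br k (T (n + 1)) = Br k (T n)) :
    IsMillerTree (⋂ n, T n) ∧ ∀ k, Br k (⋂ n, T n) = Br k (T k) := stmt10_aux T hT hsub hbr
end

section
/- Let T be a Miller tree and n ∈ ω, and for each t ∈ Br_{n+1}(T) let S_t be a Miller tree with S_t ⊆ T_t. Then T' = ⋃{S_t : t ∈ Br_{n+1}(T)} is a Miller tree, T' ⊆ T, and Br_k(T') = Br_k(T) for every k ≤ n. -/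
/-! The depth of `s` in `T` is the number of proper initial segments of `s` branching in `T`, so
`Br k T` is the set of branching nodes of depth `k`. Every node of `T` of depth at most `n + 1`
extends to some `t ∈ Br (n + 1) T`, and `t ∈ S t` because a subtree of `T_t` cannot branch strictly
below `t`; hence `T'` keeps every node of `T` of depth at most `n + 1`. Branching nodes of depth
at most `n` therefore keep all their successors, and the branching initial segments of a node of
depth at most `n + 1` are the same in `T` and `T'`, which gives `Br k T' = Br k T` for `k ≤ n`. -/

section BranchDepth

variable {T T' : Set (List ℕ)} {b s t u : List ℕ}

def branchPrefixes (T : Set (List ℕ)) (s : List ℕ) : Set (List ℕ) :=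
  {u | u <+: s ∧ u ≠ s ∧ IsBranchNode T u}

noncomputable def branchDepth (T : Set (List ℕ)) (s : List ℕ) : ℕ :=
  (branchPrefixes T s).ncard

theorem IsBranchNode.mono (h : T' ⊆ T) (hb : IsBranchNode T' b) : IsBranchNode T b :=
  let ⟨hbT, k₁, k₂, hk, h₁, h₂⟩ := hb
  ⟨h hbT, k₁, k₂, hk, h h₁, h h₂⟩

theorem branchPrefixes_finite (T : Set (List ℕ)) (s : List ℕ) : (branchPrefixes T s).Finite :=
  s.inits.finite_toSet.subset fun u hu => (List.mem_inits u s).mpr hu.1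

theorem branchPrefixes_mono (h : s <+: b) : branchPrefixes T s ⊆ branchPrefixes T b := by
  rintro u ⟨hus, hne, hu⟩
  refine ⟨hus.trans h, ?_, hu⟩
  rintro rfl
  exact hne (hus.eq_of_length (le_antisymm hus.length_le h.length_le))

theorem branchDepth_mono (h : s <+: b) : branchDepth T s ≤ branchDepth T b :=
  Set.ncard_le_ncard (branchPrefixes_mono h) (branchPrefixes_finite T b)

theorem branchDepth_lt (h : u <+: s) (hne : u ≠ s) (hu : IsBranchNode T u) :
    branchDepth T u < branchDepth T s := by
  have hsub : insert u (branchPrefixes T u) ⊆ branchPrefixes T s :=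
    Set.insert_subset ⟨h, hne, hu⟩ (branchPrefixes_mono h)
  have hcard := Set.ncard_le_ncard hsub (branchPrefixes_finite T s)
  rwa [Set.ncard_insert_of_notMem (fun hm => hm.2.1 rfl) (branchPrefixes_finite T u)] at hcard

theorem branchDepth_nil : branchDepth T [] = 0 := by
  have hempty : branchPrefixes T [] = ∅ :=
    Set.eq_empty_of_forall_notMem fun u hu => hu.2.1 (List.prefix_nil.mp hu.1)
  rw [branchDepth, hempty, Set.ncard_empty]

theorem branchDepth_append_singleton_le (k : ℕ) :
    branchDepth T (b ++ [k]) ≤ branchDepth T b + 1 := by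
  have hsub : branchPrefixes T (b ++ [k]) ⊆ insert b (branchPrefixes T b) := by
    rintro u ⟨hu, hne, hbr⟩
    rcases List.prefix_concat_iff.mp hu with rfl | hub
    · exact absurd rfl hne
    · rcases eq_or_ne u b with rfl | hne'
      · exact Set.mem_insert u _
      · exact Set.mem_insert_of_mem _ ⟨hub, hne', hbr⟩
  calc branchDepth T (b ++ [k])
      ≤ (insert b (branchPrefixes T b)).ncard :=
        Set.ncard_le_ncard hsub ((branchPrefixes_finite T b).insert b)
    _ ≤ branchDepth T b + 1 := Set.ncard_insert_le b _

theorem branchDepth_append_singleton (hb : IsBranchNode T b) (k : ℕ) :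
    branchDepth T (b ++ [k]) = branchDepth T b + 1 :=
  le_antisymm (branchDepth_append_singleton_le k)
    (branchDepth_lt (List.prefix_append b [k]) (by simp) hb)

theorem eq_of_prefix_of_mem_Br {m : ℕ} (ht : t ∈ Br m T) (hs : s ∈ Br m T) (h : t <+: s) :
    t = s := by
  by_contra hne
  exact (branchDepth_lt h hne ht.1).ne (ht.2.trans hs.2.symm)

end BranchDepth

section MillerTree

variable {T S : Set (List ℕ)} {b s t u : List ℕ}

theorem IsMillerTree.prefix_mem (hT : IsMillerTree T) (hs : s ∈ T) (h : u <+: s) : u ∈ T :=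
  hT.2.1 s hs u h

theorem IsMillerTree.nil_mem (hT : IsMillerTree T) : [] ∈ T :=
  let ⟨_, hs⟩ := hT.1
  hT.prefix_mem hs List.nil_prefix

/-- A shortest branching extension of `s` has no branching nodes in between. -/
theorem IsMillerTree.exists_isBranchNode_branchDepth_eq (hT : IsMillerTree T) (hs : s ∈ T) :
    ∃ b, s <+: b ∧ IsBranchNode T b ∧ branchDepth T b = branchDepth T s := by
  by_cases hsb : IsBranchNode T s
  · exact ⟨s, List.prefix_refl s, hsb, rfl⟩
  obtain ⟨b, ⟨hsb', hb⟩, hmin⟩ :=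
    (measure List.length).wf.has_min {b | s <+: b ∧ IsBranchNode T b} (hT.2.2.1 s hs)
  have hsub : branchPrefixes T b ⊆ branchPrefixes T s := by
    rintro u ⟨hub, hne, hu⟩
    rcases List.prefix_or_prefix_of_prefix hsb' hub with hsu | hus
    · exact absurd (lt_of_le_of_ne hub.length_le fun hl => hne (hub.eq_of_length hl))
        (hmin u ⟨hsu, hu⟩)
    · exact ⟨hus, fun he => hsb (he ▸ hu), hu⟩
  exact ⟨b, hsb', hb, le_antisymm (Set.ncard_le_ncard hsub (branchPrefixes_finite T s))
    (branchDepth_mono hsb')⟩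

theorem IsMillerTree.exists_mem_Br_of_branchDepth_le (hT : IsMillerTree T) {m : ℕ}
    (hs : s ∈ T) (h : branchDepth T s ≤ m) : ∃ t ∈ Br m T, s <+: t := by
  obtain ⟨d, hd⟩ := Nat.exists_eq_add_of_le h
  clear h
  induction d generalizing s with
  | zero =>
    obtain ⟨b, hsb, hb, hdepth⟩ := hT.exists_isBranchNode_branchDepth_eq hs
    exact ⟨b, ⟨hb, hdepth.trans hd.symm⟩, hsb⟩
  | succ d ih =>
    obtain ⟨b, hsb, hb, hdepth⟩ := hT.exists_isBranchNode_branchDepth_eq hs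
    obtain ⟨k, -, -, hk, -⟩ := hb.2
    have hdepth' : branchDepth T (b ++ [k]) = branchDepth T s + 1 := by
      rw [branchDepth_append_singleton hb, hdepth]
    obtain ⟨t, ht, hbt⟩ := ih hk (by omega)
    exact ⟨t, ht, hsb.trans ((List.prefix_append b [k]).trans hbt)⟩

/-- Inside `T_t`, the immediate successor of a proper initial segment of `t` is forced. -/
theorem not_isBranchNode_of_subset_subtreeAt (hS : S ⊆ subtreeAt T t) (hbt : b <+: t)
    (hne : b ≠ t) : ¬ IsBranchNode S b := by
  rintro ⟨-, k₁, k₂, hk, h₁, h₂⟩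
  obtain ⟨r, rfl⟩ := hbt
  obtain ⟨x, r, rfl⟩ := List.exists_cons_of_ne_nil (by simpa using hne)
  have head_eq : ∀ k, b ++ [k] ∈ S → k = x := fun k hk => by
    rcases (hS hk).2 with h | h <;> simp_all [List.prefix_append_right_inj]
  exact hk ((head_eq k₁ h₁).trans (head_eq k₂ h₂).symm)

theorem IsMillerTree.mem_of_subset_subtreeAt (hS : IsMillerTree S) (hST : S ⊆ subtreeAt T t) :
    t ∈ S := by
  obtain ⟨b, -, hb⟩ := hS.2.2.1 [] hS.nil_mem
  rcases (hST hb.1).2 with hbt | htb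
  · by_cases hne : b = t
    · exact hne ▸ hb.1
    · exact absurd hb (not_isBranchNode_of_subset_subtreeAt hST hbt hne)
  · exact hS.prefix_mem hb.1 htb

theorem prefix_of_mem_subtreeAt_of_ne {m : ℕ} {t₁ t₂ : List ℕ} (ht₁ : t₁ ∈ Br m T)
    (ht₂ : t₂ ∈ Br m T) (hne : t₁ ≠ t₂) (hb₁ : b ∈ subtreeAt T t₁) (hb₂ : b ∈ subtreeAt T t₂) :
    b <+: t₁ ∧ b ≠ t₁ := by
  have not_le : ¬ t₁ <+: b := by
    intro h
    rcases hb₂.2 with h' | h'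
    · exact hne (eq_of_prefix_of_mem_Br ht₁ ht₂ (h.trans h'))
    · rcases List.prefix_or_prefix_of_prefix h h' with h'' | h''
      · exact hne (eq_of_prefix_of_mem_Br ht₁ ht₂ h'')
      · exact hne (eq_of_prefix_of_mem_Br ht₂ ht₁ h'').symm
  exact ⟨hb₁.2.resolve_right not_le, fun he => not_le (he ▸ List.prefix_refl b)⟩

end MillerTree

section Graft

def graft (T : Set (List ℕ)) (m : ℕ) (S : List ℕ → Set (List ℕ)) : Set (List ℕ) :=
  ⋃ t ∈ Br m T, S t

def IsMillerSubtreeFamily (T : Set (List ℕ)) (m : ℕ) (S : List ℕ → Set (List ℕ)) : Prop :=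
  ∀ t ∈ Br m T, IsMillerTree (S t) ∧ S t ⊆ subtreeAt T t

variable {T : Set (List ℕ)} {m : ℕ} {S : List ℕ → Set (List ℕ)} {b s : List ℕ}

theorem mem_graft : s ∈ graft T m S ↔ ∃ t ∈ Br m T, s ∈ S t := by
  simp only [graft, Set.mem_iUnion, exists_prop]

theorem subset_graft {t : List ℕ} (ht : t ∈ Br m T) : S t ⊆ graft T m S := fun _ hs =>
  mem_graft.mpr ⟨t, ht, hs⟩

theorem graft_subset (hS : IsMillerSubtreeFamily T m S) : graft T m S ⊆ T := fun _ hs =>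
  let ⟨t, ht, hst⟩ := mem_graft.mp hs
  ((hS t ht).2 hst).1

theorem graft_prefix_mem (hS : IsMillerSubtreeFamily T m S) (hs : s ∈ graft T m S) {u : List ℕ}
    (h : u <+: s) : u ∈ graft T m S :=
  let ⟨t, ht, hst⟩ := mem_graft.mp hs
  subset_graft ht ((hS t ht).1.prefix_mem hst h)

theorem mem_graft_of_branchDepth_le (hT : IsMillerTree T) (hS : IsMillerSubtreeFamily T m S)
    (hs : s ∈ T) (h : branchDepth T s ≤ m) : s ∈ graft T m S := by
  obtain ⟨t, ht, hst⟩ := hT.exists_mem_Br_of_branchDepth_le hs h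
  have htS : t ∈ S t := (hS t ht).1.mem_of_subset_subtreeAt (hS t ht).2
  exact subset_graft ht ((hS t ht).1.prefix_mem htS hst)

theorem append_mem_graft (hT : IsMillerTree T) (hS : IsMillerSubtreeFamily T m S)
    (hb : branchDepth T b < m) {k : ℕ} (hk : b ++ [k] ∈ T) : b ++ [k] ∈ graft T m S :=
  mem_graft_of_branchDepth_le hT hS hk ((branchDepth_append_singleton_le k).trans hb)

theorem isBranchNode_graft (hT : IsMillerTree T) (hS : IsMillerSubtreeFamily T m S)
    (hb : IsBranchNode T b) (h : branchDepth T b < m) : IsBranchNode (graft T m S) b := by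
  obtain ⟨-, k₁, k₂, hk, h₁, h₂⟩ := hb
  have h₁' := append_mem_graft hT hS h h₁
  exact ⟨graft_prefix_mem hS h₁' (List.prefix_append b [k₁]), k₁, k₂, hk, h₁',
    append_mem_graft hT hS h h₂⟩

theorem branchPrefixes_graft (hT : IsMillerTree T) (hS : IsMillerSubtreeFamily T m S)
    (h : branchDepth T b ≤ m) : branchPrefixes (graft T m S) b = branchPrefixes T b := by
  ext u
  refine ⟨fun ⟨hub, hne, hu⟩ => ⟨hub, hne, hu.mono (graft_subset hS)⟩,
    fun ⟨hub, hne, hu⟩ => ⟨hub, hne, isBranchNode_graft hT hS hu ?_⟩⟩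
  exact (branchDepth_lt hub hne hu).trans_le h

theorem branchDepth_graft (hT : IsMillerTree T) (hS : IsMillerSubtreeFamily T m S)
    (h : branchDepth T b ≤ m) : branchDepth (graft T m S) b = branchDepth T b := by
  rw [branchDepth, branchDepth, branchPrefixes_graft hT hS h]

/-- Two successors of `b` coming from different `S t` force `b` strictly below some `t`, where
all successors from `T` survive; otherwise `b` branches inside a single Miller tree `S t`. -/
theorem graft_successors_infinite (hT : IsMillerTree T) (hS : IsMillerSubtreeFamily T m S)
    (hb : IsBranchNode (graft T m S) b) : {k : ℕ | b ++ [k] ∈ graft T m S}.Infinite := by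
  obtain ⟨hbG, k₁, k₂, hk, h₁, h₂⟩ := hb
  obtain ⟨t₁, ht₁, h₁⟩ := mem_graft.mp h₁
  obtain ⟨t₂, ht₂, h₂⟩ := mem_graft.mp h₂
  have hb₁ : b ∈ S t₁ := (hS t₁ ht₁).1.prefix_mem h₁ (List.prefix_append b [k₁])
  by_cases ht : t₁ = t₂
  · subst ht
    exact ((hS t₁ ht₁).1.2.2.2 b ⟨hb₁, k₁, k₂, hk, h₁, h₂⟩).mono
      fun k hk => subset_graft ht₁ hk
  · have hb₂ : b ∈ S t₂ := (hS t₂ ht₂).1.prefix_mem h₂ (List.prefix_append b [k₂])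
    obtain ⟨hbt, hne⟩ :=
      prefix_of_mem_subtreeAt_of_ne ht₁ ht₂ ht ((hS t₁ ht₁).2 hb₁) ((hS t₂ ht₂).2 hb₂)
    have hbT : IsBranchNode T b := IsBranchNode.mono (graft_subset hS)
      ⟨hbG, k₁, k₂, hk, subset_graft ht₁ h₁, subset_graft ht₂ h₂⟩
    have hdepth : branchDepth T b < m := (branchDepth_lt hbt hne hbT).trans_eq ht₁.2
    exact (hT.2.2.2 b hbT).mono fun k hk => append_mem_graft hT hS hdepth hk

theorem isMillerTree_graft (hT : IsMillerTree T) (hS : IsMillerSubtreeFamily T m S) :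
    IsMillerTree (graft T m S) := by
  refine ⟨⟨[], mem_graft_of_branchDepth_le hT hS hT.nil_mem (branchDepth_nil.trans_le m.zero_le)⟩,
    fun s hs u h => graft_prefix_mem hS hs h, fun s hs => ?_,
    fun b hb => graft_successors_infinite hT hS hb⟩
  obtain ⟨t, ht, hst⟩ := mem_graft.mp hs
  obtain ⟨b, hsb, hbS, k₁, k₂, hk, h₁, h₂⟩ := (hS t ht).1.2.2.1 s hst
  exact ⟨b, hsb, subset_graft ht hbS, k₁, k₂, hk, subset_graft ht h₁, subset_graft ht h₂⟩

theorem Br_graft (hT : IsMillerTree T) (hS : IsMillerSubtreeFamily T m S) {k : ℕ} (hk : k < m) :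
    Br k (graft T m S) = Br k T := by
  ext b
  constructor
  · rintro ⟨hbG, hdepth⟩
    have hbT := hbG.mono (graft_subset hS)
    by_cases hle : branchDepth T b ≤ m
    · exact ⟨hbT, (branchDepth_graft hT hS hle).symm.trans hdepth⟩
    obtain ⟨t, ht, hbt⟩ := mem_graft.mp hbG.1
    have htb : t <+: b := ((hS t ht).2 hbt).2.resolve_left
      fun h => hle ((branchDepth_mono h).trans_eq ht.2)
    have : m ≤ branchDepth (graft T m S) b := calc
      m = branchDepth T t := ht.2.symm
      _ = branchDepth (graft T m S) t := (branchDepth_graft hT hS ht.2.le).symm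
      _ ≤ branchDepth (graft T m S) b := branchDepth_mono htb
    exact absurd (hdepth ▸ this) hk.not_ge
  · rintro ⟨hbT, hdepth⟩
    refine ⟨isBranchNode_graft hT hS hbT (hdepth.trans_lt hk), ?_⟩
    exact (branchDepth_graft hT hS (hdepth.trans_le hk.le)).trans hdepth

end Graft

theorem stmt11 (T : Set (List ℕ)) (hT : IsMillerTree T) (n : ℕ)
    (S : List ℕ → Set (List ℕ))
    (hS : ∀ t ∈ Br (n + 1) T, IsMillerTree (S t) ∧ S t ⊆ subtreeAt T t) :
    IsMillerTree (⋃ t ∈ Br (n + 1) T, S t) ∧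
    (⋃ t ∈ Br (n + 1) T, S t) ⊆ T ∧
    ∀ k ≤ n, Br k (⋃ t ∈ Br (n + 1) T, S t) = Br k T :=
  ⟨isMillerTree_graft hT hS, graft_subset hS,
    fun _ hk => Br_graft hT hS (Nat.lt_succ_of_le hk)⟩
end
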